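/- arXiv:2411.16461 — 5 statements merged into one kernel-verified Lean document; each statement's English description precedes it below -/
import Mathlib

section
/- Let M_± = K_∓^1 − K_±^2 and M_0 = K_0^1 − K_0^2, where superscripts 1, 2 denote the action on the k-qubit and (N−k)-qubit symmetric factors respectively. Then [M_0, M_±] = ± M_± and both M_± and M_0 commute with ρ_0^{T_A}. -/
open Matrix Kronecker

/-- Raising operator `K₊` on the Dicke basis of an `n`-qubit symmetric space:
`K₊|D^(α)⟩ = sqrt((n−α)(α+1))|D^(α+1)⟩`. -/
noncomputable def Kp (n : ℕ) : Matrix (Fin (n+1)) (Fin (n+1)) ℝ :=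
  fun i j => if (i : ℕ) = (j : ℕ) + 1
    then Real.sqrt (((n : ℝ) - (j : ℕ)) * ((j : ℕ) + 1)) else 0

/-- Lowering operator `K₋`: `K₋|D^(α)⟩ = sqrt(α(n−α+1))|D^(α−1)⟩`. -/
noncomputable def Km (n : ℕ) : Matrix (Fin (n+1)) (Fin (n+1)) ℝ :=
  fun i j => if (i : ℕ) + 1 = (j : ℕ)
    then Real.sqrt (((j : ℕ) : ℝ) * ((n : ℝ) - (j : ℕ) + 1)) else 0

/-- Diagonal operator `K₀`: `K₀|D^(α)⟩ = (n/2 − α)|D^(α)⟩`. -/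
noncomputable def K0 (n : ℕ) : Matrix (Fin (n+1)) (Fin (n+1)) ℝ :=
  fun i j => if i = j then ((n : ℝ) / 2 - (i : ℕ)) else 0

/-- `M₊ = K₋¹ − K₊²` on `H^{∨k} ⊗ H^{∨(N−k)}`. -/
noncomputable def Mp (N k : ℕ) : Matrix (Fin (k+1) × Fin (N-k+1)) (Fin (k+1) × Fin (N-k+1)) ℝ :=
  Km k ⊗ₖ (1 : Matrix (Fin (N-k+1)) (Fin (N-k+1)) ℝ) -
    (1 : Matrix (Fin (k+1)) (Fin (k+1)) ℝ) ⊗ₖ Kp (N - k)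

/-- `M₋ = K₊¹ − K₋²`. -/
noncomputable def Mm (N k : ℕ) : Matrix (Fin (k+1) × Fin (N-k+1)) (Fin (k+1) × Fin (N-k+1)) ℝ :=
  Kp k ⊗ₖ (1 : Matrix (Fin (N-k+1)) (Fin (N-k+1)) ℝ) -
    (1 : Matrix (Fin (k+1)) (Fin (k+1)) ℝ) ⊗ₖ Km (N - k)

/-- `M₀ = K₀¹ − K₀²`. -/
noncomputable def M0 (N k : ℕ) : Matrix (Fin (k+1) × Fin (N-k+1)) (Fin (k+1) × Fin (N-k+1)) ℝ :=
  K0 k ⊗ₖ (1 : Matrix (Fin (N-k+1)) (Fin (N-k+1)) ℝ) -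
    (1 : Matrix (Fin (k+1)) (Fin (k+1)) ℝ) ⊗ₖ K0 (N - k)

/-- The partial transpose `ρ₀^{T_A}` of the maximally mixed symmetric state,
in the product Dicke basis (via the `χ`-coefficient formula). -/
noncomputable def rho0TA (N k : ℕ) :
    Matrix (Fin (k+1) × Fin (N-k+1)) (Fin (k+1) × Fin (N-k+1)) ℝ :=
  fun p q =>
    if ((p.1 : ℕ) + (q.2 : ℕ)) = ((q.1 : ℕ) + (p.2 : ℕ)) then
      (1 / (N + 1)) *
        Real.sqrt ((k.choose q.1 * (N - k).choose p.2 : ℝ) /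
          (N.choose ((p.1 : ℕ) + (q.2 : ℕ)))) *
        Real.sqrt ((k.choose p.1 * (N - k).choose q.2 : ℝ) /
          (N.choose ((p.1 : ℕ) + (q.2 : ℕ))))
    else 0

lemma core (P Q R C T W : ℝ) (hP : 0 ≤ P) (hQ : 0 ≤ Q) (hR : 0 ≤ R) (hC : 0 < C)
    (hT : 0 ≤ T) (hW : 0 ≤ W) (h : P * Q * R = T^2 * W) :
    Real.sqrt P * Real.sqrt (Q/C) * Real.sqrt (R/C) = T * Real.sqrt W / C := by
  rw [Real.sqrt_div hQ, Real.sqrt_div hR,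
    show Real.sqrt P * (Real.sqrt Q / Real.sqrt C) * (Real.sqrt R / Real.sqrt C)
      = (Real.sqrt P * Real.sqrt Q * Real.sqrt R) / (Real.sqrt C * Real.sqrt C) by ring,
    Real.mul_self_sqrt hC.le, ← Real.sqrt_mul hP, ← Real.sqrt_mul (by positivity), h,
    Real.sqrt_mul (by positivity), Real.sqrt_sq hT]

lemma sum_Km_left (k : ℕ) (a : Fin (k+1)) (g : Fin (k+1) → ℝ) :
    (∑ e, Km k a e * g e) =
      if h : (a:ℕ) < k then
        Real.sqrt (((a:ℕ)+1 : ℝ) * ((k:ℝ) - (a:ℕ))) * g ⟨(a:ℕ)+1, by omega⟩ else 0 := by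
  by_cases h : (a:ℕ) < k
  · rw [dif_pos h, Finset.sum_eq_single (⟨(a:ℕ)+1, by omega⟩ : Fin (k+1))]
    · simp only [Km, Fin.val_mk, if_pos rfl]
      congr 2
      push_cast
      ring
    · intro e _ he
      rw [Km, if_neg, zero_mul]
      intro hh
      exact he (by apply Fin.ext; simp only [Fin.val_mk]; omega)
    · simp
  · rw [dif_neg h]
    apply Finset.sum_eq_zero
    intro e _
    rw [Km, if_neg, zero_mul]
    have := e.isLt
    omega

lemma sum_Kp_left (n : ℕ) (b : Fin (n+1)) (g : Fin (n+1) → ℝ) :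
    (∑ f, Kp n b f * g f) =
      if h : 1 ≤ (b:ℕ) then
        Real.sqrt (((n:ℝ) - (b:ℕ) + 1) * (b:ℕ)) * g ⟨(b:ℕ)-1, by omega⟩ else 0 := by
  by_cases h : 1 ≤ (b:ℕ)
  · rw [dif_pos h, Finset.sum_eq_single (⟨(b:ℕ)-1, by omega⟩ : Fin (n+1))]
    · simp only [Kp, Fin.val_mk]
      rw [if_pos (by omega)]
      congr 2
      have h3 : ((((b:ℕ)-1 : ℕ)) : ℝ) = (b:ℕ) - 1 := by push_cast [h]; ring
      rw [h3]; ring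
    · intro e _ he
      rw [Kp, if_neg, zero_mul]
      intro hh
      exact he (by apply Fin.ext; simp only [Fin.val_mk]; omega)
    · simp
  · rw [dif_neg h]
    apply Finset.sum_eq_zero
    intro e _
    rw [Kp, if_neg, zero_mul]
    omega

lemma sum_Km_right (k : ℕ) (c : Fin (k+1)) (g : Fin (k+1) → ℝ) :
    (∑ e, g e * Km k e c) =
      if h : 1 ≤ (c:ℕ) then
        g ⟨(c:ℕ)-1, by omega⟩ * Real.sqrt (((c:ℕ) : ℝ) * ((k:ℝ) - (c:ℕ) + 1)) else 0 := by
  by_cases h : 1 ≤ (c:ℕ)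
  · rw [dif_pos h, Finset.sum_eq_single (⟨(c:ℕ)-1, by omega⟩ : Fin (k+1))]
    · simp only [Km, Fin.val_mk]
      rw [if_pos (by omega)]
    · intro e _ he
      rw [Km, if_neg, mul_zero]
      intro hh
      exact he (by apply Fin.ext; simp only [Fin.val_mk]; omega)
    · simp
  · rw [dif_neg h]
    apply Finset.sum_eq_zero
    intro e _
    rw [Km, if_neg, mul_zero]
    omega

lemma sum_Kp_right (n : ℕ) (d : Fin (n+1)) (g : Fin (n+1) → ℝ) :
    (∑ f, g f * Kp n f d) =
      if h : (d:ℕ) < n then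
        g ⟨(d:ℕ)+1, by omega⟩ * Real.sqrt (((n:ℝ) - (d:ℕ)) * ((d:ℕ)+1)) else 0 := by
  by_cases h : (d:ℕ) < n
  · rw [dif_pos h, Finset.sum_eq_single (⟨(d:ℕ)+1, by omega⟩ : Fin (n+1))]
    · simp only [Kp, Fin.val_mk, if_true]
    · intro e _ he
      rw [Kp, if_neg, mul_zero]
      intro hh
      exact he (by apply Fin.ext; simp only [Fin.val_mk]; omega)
    · simp
  · rw [dif_neg h]
    apply Finset.sum_eq_zero
    intro e _
    rw [Kp, if_neg, mul_zero]
    have := e.isLt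
    omega

lemma term1 (N k : ℕ) (hkN : k ≤ N) (a c : Fin (k+1)) (b d : Fin (N-k+1)) :
    (∑ e, Km k a e * rho0TA N k (e, b) (c, d)) =
      if (a:ℕ) + (d:ℕ) + 1 = (c:ℕ) + (b:ℕ) then
        1/((N:ℝ)+1) * (((k:ℝ) - (a:ℕ)) *
          Real.sqrt ((k.choose (a:ℕ) : ℝ) * (k.choose (c:ℕ) : ℝ) *
            ((N-k).choose (b:ℕ) : ℝ) * ((N-k).choose (d:ℕ) : ℝ)) /
          (N.choose ((a:ℕ)+(d:ℕ)+1) : ℝ))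
      else 0 := by
  rw [sum_Km_left]
  by_cases hak : (a:ℕ) < k
  · rw [dif_pos hak]
    simp only [rho0TA, Fin.val_mk]
    rw [show (a:ℕ)+1+(d:ℕ) = (a:ℕ)+(d:ℕ)+1 from by omega]
    by_cases hcond : (a:ℕ)+(d:ℕ)+1 = (c:ℕ)+(b:ℕ)
    · rw [if_pos hcond, if_pos hcond]
      have hm : (a:ℕ)+(d:ℕ)+1 ≤ N := by
        have := c.isLt; have := b.isLt; omega
      have hC : (0:ℝ) < (N.choose ((a:ℕ)+(d:ℕ)+1) : ℝ) := by
        exact_mod_cast Nat.choose_pos hm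
      have ha : (a:ℕ) ≤ k := by omega
      have hka : ((k - (a:ℕ) : ℕ) : ℝ) = (k:ℝ) - ((a:ℕ):ℝ) := by
        rw [Nat.cast_sub ha]
      have hr : (k.choose ((a:ℕ)+1) : ℝ) * (((a:ℕ):ℝ)+1)
          = (k.choose (a:ℕ) : ℝ) * ((k:ℝ) - ((a:ℕ):ℝ)) := by
        rw [← hka]
        exact_mod_cast Nat.choose_succ_right_eq k (a:ℕ)
      have hT : (0:ℝ) ≤ (k:ℝ) - ((a:ℕ):ℝ) := by
        rw [← hka]; positivity
      have hcore := core ((((a:ℕ):ℝ)+1) * ((k:ℝ) - ((a:ℕ):ℝ)))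
        ((k.choose (c:ℕ) : ℝ) * ((N-k).choose (b:ℕ) : ℝ))
        ((k.choose ((a:ℕ)+1) : ℝ) * ((N-k).choose (d:ℕ) : ℝ))
        ((N.choose ((a:ℕ)+(d:ℕ)+1) : ℝ))
        ((k:ℝ) - ((a:ℕ):ℝ))
        ((k.choose (a:ℕ) : ℝ) * (k.choose (c:ℕ) : ℝ) *
            ((N-k).choose (b:ℕ) : ℝ) * ((N-k).choose (d:ℕ) : ℝ))
        (by positivity) (by positivity) (by positivity) hC hT (by positivity)
        (by linear_combination (((k:ℝ) - ((a:ℕ):ℝ)) * (k.choose (c:ℕ) : ℝ) *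
          ((N-k).choose (b:ℕ) : ℝ) * ((N-k).choose (d:ℕ) : ℝ)) * hr)
      linear_combination (1/((N:ℝ)+1)) * hcore
    · rw [if_neg hcond, if_neg hcond, mul_zero]
  · rw [dif_neg hak]
    have hak' : (a:ℕ) = k := by have := a.isLt; omega
    split_ifs with hcond
    · rw [show ((k:ℝ) - ((a:ℕ):ℝ)) = 0 from by rw [hak']; ring]
      ring
    · rfl

lemma term2 (N k : ℕ) (hkN : k ≤ N) (a c : Fin (k+1)) (b d : Fin (N-k+1)) :
    (∑ f, Kp (N-k) b f * rho0TA N k (a, f) (c, d)) =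
      if (a:ℕ) + (d:ℕ) + 1 = (c:ℕ) + (b:ℕ) then
        1/((N:ℝ)+1) * ((((b:ℕ):ℝ)) *
          Real.sqrt ((k.choose (a:ℕ) : ℝ) * (k.choose (c:ℕ) : ℝ) *
            ((N-k).choose (b:ℕ) : ℝ) * ((N-k).choose (d:ℕ) : ℝ)) /
          (N.choose ((a:ℕ)+(d:ℕ)) : ℝ))
      else 0 := by
  rw [sum_Kp_left]
  by_cases hb1 : 1 ≤ (b:ℕ)
  · rw [dif_pos hb1]
    simp only [rho0TA, Fin.val_mk]
    by_cases hcond : (a:ℕ)+(d:ℕ)+1 = (c:ℕ)+(b:ℕ)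
    · rw [if_pos (by omega : (a:ℕ)+(d:ℕ) = (c:ℕ)+((b:ℕ)-1)), if_pos hcond]
      have hm : (a:ℕ)+(d:ℕ) ≤ N := by
        have := a.isLt; have := d.isLt; omega
      have hC : (0:ℝ) < (N.choose ((a:ℕ)+(d:ℕ)) : ℝ) := by
        exact_mod_cast Nat.choose_pos hm
      have hbn : (b:ℕ) ≤ N-k := by have := b.isLt; omega
      have hnb : ((N-k - ((b:ℕ)-1) : ℕ) : ℝ) = ((N-k:ℕ):ℝ) - ((b:ℕ):ℝ) + 1 := by
        rw [Nat.cast_sub (by omega)]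
        rw [Nat.cast_sub hb1]
        push_cast
        ring
      have hr : ((N-k).choose (b:ℕ) : ℝ) * ((b:ℕ):ℝ)
          = ((N-k).choose ((b:ℕ)-1) : ℝ) * (((N-k:ℕ):ℝ) - ((b:ℕ):ℝ) + 1) := by
        rw [← hnb]
        have h2 := Nat.choose_succ_right_eq (N-k) ((b:ℕ)-1)
        rw [show (b:ℕ)-1+1 = (b:ℕ) from by omega] at h2
        exact_mod_cast h2
      have hT : (0:ℝ) ≤ ((b:ℕ):ℝ) := by positivity
      have hP : (0:ℝ) ≤ (((N-k:ℕ):ℝ) - ((b:ℕ):ℝ) + 1) * ((b:ℕ):ℝ) := by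
        rw [← hnb]; positivity
      have hcore := core ((((N-k:ℕ):ℝ) - ((b:ℕ):ℝ) + 1) * ((b:ℕ):ℝ))
        ((k.choose (c:ℕ) : ℝ) * ((N-k).choose ((b:ℕ)-1) : ℝ))
        ((k.choose (a:ℕ) : ℝ) * ((N-k).choose (d:ℕ) : ℝ))
        ((N.choose ((a:ℕ)+(d:ℕ)) : ℝ))
        (((b:ℕ):ℝ))
        ((k.choose (a:ℕ) : ℝ) * (k.choose (c:ℕ) : ℝ) *
            ((N-k).choose (b:ℕ) : ℝ) * ((N-k).choose (d:ℕ) : ℝ))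
        hP (by positivity) (by positivity) hC hT (by positivity)
        (by linear_combination (-(((b:ℕ):ℝ) * (k.choose (a:ℕ) : ℝ) * (k.choose (c:ℕ) : ℝ) *
          ((N-k).choose (d:ℕ) : ℝ))) * hr)
      linear_combination (1/((N:ℝ)+1)) * hcore
    · rw [if_neg (by omega : ¬ ((a:ℕ)+(d:ℕ) = (c:ℕ)+((b:ℕ)-1))), if_neg hcond, mul_zero]
  · rw [dif_neg hb1]
    have hb0 : (b:ℕ) = 0 := by omega
    split_ifs with hcond
    · rw [show (((b:ℕ):ℝ)) = 0 from by rw [hb0]; ring]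
      ring
    · rfl

lemma term3 (N k : ℕ) (hkN : k ≤ N) (a c : Fin (k+1)) (b d : Fin (N-k+1)) :
    (∑ e, rho0TA N k (a, b) (e, d) * Km k e c) =
      if (a:ℕ) + (d:ℕ) + 1 = (c:ℕ) + (b:ℕ) then
        1/((N:ℝ)+1) * ((((c:ℕ):ℝ)) *
          Real.sqrt ((k.choose (a:ℕ) : ℝ) * (k.choose (c:ℕ) : ℝ) *
            ((N-k).choose (b:ℕ) : ℝ) * ((N-k).choose (d:ℕ) : ℝ)) /
          (N.choose ((a:ℕ)+(d:ℕ)) : ℝ))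
      else 0 := by
  rw [sum_Km_right]
  by_cases hc1 : 1 ≤ (c:ℕ)
  · rw [dif_pos hc1]
    simp only [rho0TA, Fin.val_mk]
    by_cases hcond : (a:ℕ)+(d:ℕ)+1 = (c:ℕ)+(b:ℕ)
    · rw [if_pos (by omega : (a:ℕ)+(d:ℕ) = ((c:ℕ)-1)+((b:ℕ))), if_pos hcond]
      have hm : (a:ℕ)+(d:ℕ) ≤ N := by
        have := a.isLt; have := d.isLt; omega
      have hC : (0:ℝ) < (N.choose ((a:ℕ)+(d:ℕ)) : ℝ) := by
        exact_mod_cast Nat.choose_pos hm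
      have hck : (c:ℕ) ≤ k := by have := c.isLt; omega
      have hkc : ((k - ((c:ℕ)-1) : ℕ) : ℝ) = ((k:ℕ):ℝ) - ((c:ℕ):ℝ) + 1 := by
        rw [Nat.cast_sub (by omega)]
        rw [Nat.cast_sub hc1]
        push_cast
        ring
      have hr : (k.choose (c:ℕ) : ℝ) * ((c:ℕ):ℝ)
          = (k.choose ((c:ℕ)-1) : ℝ) * (((k:ℕ):ℝ) - ((c:ℕ):ℝ) + 1) := by
        rw [← hkc]
        have h2 := Nat.choose_succ_right_eq k ((c:ℕ)-1)
        rw [show (c:ℕ)-1+1 = (c:ℕ) from by omega] at h2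
        exact_mod_cast h2
      have hP : (0:ℝ) ≤ ((c:ℕ):ℝ) * (((k:ℕ):ℝ) - ((c:ℕ):ℝ) + 1) := by
        have : (0:ℝ) ≤ (((k:ℕ):ℝ) - ((c:ℕ):ℝ) + 1) := by rw [← hkc]; positivity
        positivity
      have hcore := core (((c:ℕ):ℝ) * (((k:ℕ):ℝ) - ((c:ℕ):ℝ) + 1))
        ((k.choose ((c:ℕ)-1) : ℝ) * ((N-k).choose (b:ℕ) : ℝ))
        ((k.choose (a:ℕ) : ℝ) * ((N-k).choose (d:ℕ) : ℝ))
        ((N.choose ((a:ℕ)+(d:ℕ)) : ℝ))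
        (((c:ℕ):ℝ))
        ((k.choose (a:ℕ) : ℝ) * (k.choose (c:ℕ) : ℝ) *
            ((N-k).choose (b:ℕ) : ℝ) * ((N-k).choose (d:ℕ) : ℝ))
        hP (by positivity) (by positivity) hC (by positivity) (by positivity)
        (by linear_combination (-(((c:ℕ):ℝ) * (k.choose (a:ℕ) : ℝ) * ((N-k).choose (b:ℕ) : ℝ) *
          ((N-k).choose (d:ℕ) : ℝ))) * hr)
      linear_combination (1/((N:ℝ)+1)) * hcore
    · rw [if_neg (by omega : ¬ ((a:ℕ)+(d:ℕ) = ((c:ℕ)-1)+((b:ℕ)))), if_neg hcond, zero_mul]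
  · rw [dif_neg hc1]
    have hc0 : (c:ℕ) = 0 := by omega
    split_ifs with hcond
    · rw [show (((c:ℕ):ℝ)) = 0 from by rw [hc0]; ring]
      ring
    · rfl

lemma term4 (N k : ℕ) (hkN : k ≤ N) (a c : Fin (k+1)) (b d : Fin (N-k+1)) :
    (∑ f, rho0TA N k (a, b) (c, f) * Kp (N-k) f d) =
      if (a:ℕ) + (d:ℕ) + 1 = (c:ℕ) + (b:ℕ) then
        1/((N:ℝ)+1) * ((((N-k:ℕ):ℝ) - ((d:ℕ):ℝ)) *
          Real.sqrt ((k.choose (a:ℕ) : ℝ) * (k.choose (c:ℕ) : ℝ) *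
            ((N-k).choose (b:ℕ) : ℝ) * ((N-k).choose (d:ℕ) : ℝ)) /
          (N.choose ((a:ℕ)+(d:ℕ)+1) : ℝ))
      else 0 := by
  rw [sum_Kp_right]
  by_cases hd : (d:ℕ) < N-k
  · rw [dif_pos hd]
    simp only [rho0TA, Fin.val_mk]
    rw [show (a:ℕ)+((d:ℕ)+1) = (a:ℕ)+(d:ℕ)+1 from by omega]
    by_cases hcond : (a:ℕ)+(d:ℕ)+1 = (c:ℕ)+(b:ℕ)
    · rw [if_pos hcond, if_pos hcond]
      have hm : (a:ℕ)+(d:ℕ)+1 ≤ N := by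
        have := c.isLt; have := b.isLt; omega
      have hC : (0:ℝ) < (N.choose ((a:ℕ)+(d:ℕ)+1) : ℝ) := by
        exact_mod_cast Nat.choose_pos hm
      have hnd : ((N-k - (d:ℕ) : ℕ) : ℝ) = ((N-k:ℕ):ℝ) - ((d:ℕ):ℝ) := by
        rw [Nat.cast_sub (by omega)]
      have hr : ((N-k).choose ((d:ℕ)+1) : ℝ) * (((d:ℕ):ℝ)+1)
          = ((N-k).choose (d:ℕ) : ℝ) * (((N-k:ℕ):ℝ) - ((d:ℕ):ℝ)) := by
        rw [← hnd]
        exact_mod_cast Nat.choose_succ_right_eq (N-k) (d:ℕ)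
      have hT : (0:ℝ) ≤ ((N-k:ℕ):ℝ) - ((d:ℕ):ℝ) := by rw [← hnd]; positivity
      have hcore := core ((((N-k:ℕ):ℝ) - ((d:ℕ):ℝ)) * (((d:ℕ):ℝ)+1))
        ((k.choose (c:ℕ) : ℝ) * ((N-k).choose (b:ℕ) : ℝ))
        ((k.choose (a:ℕ) : ℝ) * ((N-k).choose ((d:ℕ)+1) : ℝ))
        ((N.choose ((a:ℕ)+(d:ℕ)+1) : ℝ))
        (((N-k:ℕ):ℝ) - ((d:ℕ):ℝ))
        ((k.choose (a:ℕ) : ℝ) * (k.choose (c:ℕ) : ℝ) *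
            ((N-k).choose (b:ℕ) : ℝ) * ((N-k).choose (d:ℕ) : ℝ))
        (by positivity) (by positivity) (by positivity) hC hT (by positivity)
        (by linear_combination ((((N-k:ℕ):ℝ) - ((d:ℕ):ℝ)) * (k.choose (a:ℕ) : ℝ) *
          (k.choose (c:ℕ) : ℝ) * ((N-k).choose (b:ℕ) : ℝ)) * hr)
      linear_combination (1/((N:ℝ)+1)) * hcore
    · rw [if_neg hcond, if_neg hcond, zero_mul]
  · rw [dif_neg hd]
    have hd' : (d:ℕ) = N-k := by have := d.isLt; omega
    split_ifs with hcond
    · rw [show (((N-k:ℕ):ℝ) - ((d:ℕ):ℝ)) = 0 from by rw [hd']; ring]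
      ring
    · rfl

lemma Mp_comm_rho (N k : ℕ) (hkN : k ≤ N) :
    Mp N k * rho0TA N k = rho0TA N k * Mp N k := by
  ext ⟨a, b⟩ ⟨c, d⟩
  have hL : (Mp N k * rho0TA N k) (a,b) (c,d) =
      (∑ e, Km k a e * rho0TA N k (e, b) (c,d)) -
        ∑ f, Kp (N-k) b f * rho0TA N k (a, f) (c,d) := by
    rw [Matrix.mul_apply, Fintype.sum_prod_type]
    simp only [Mp, Matrix.sub_apply, Matrix.kroneckerMap_apply, Matrix.one_apply, sub_mul,
      mul_ite, ite_mul, mul_one, one_mul, mul_zero, zero_mul, Finset.sum_sub_distrib,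
      Finset.sum_ite_eq, Finset.sum_ite_eq', Finset.mem_univ, if_true]
    rw [Finset.sum_comm]
    simp [Finset.sum_ite_eq]
  have hR : (rho0TA N k * Mp N k) (a,b) (c,d) =
      (∑ e, rho0TA N k (a,b) (e, d) * Km k e c) -
        ∑ f, rho0TA N k (a,b) (c, f) * Kp (N-k) f d := by
    rw [Matrix.mul_apply, Fintype.sum_prod_type]
    simp only [Mp, Matrix.sub_apply, Matrix.kroneckerMap_apply, Matrix.one_apply, mul_sub,
      mul_ite, ite_mul, mul_one, one_mul, mul_zero, zero_mul, Finset.sum_sub_distrib,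
      Finset.sum_ite_eq, Finset.sum_ite_eq', Finset.mem_univ, if_true]
    rw [Finset.sum_comm]
    simp [Finset.sum_ite_eq, Finset.sum_ite_eq']
  rw [hL, hR, term1 N k hkN a c b d, term2 N k hkN a c b d,
    term3 N k hkN a c b d, term4 N k hkN a c b d]
  by_cases hcond : (a:ℕ)+(d:ℕ)+1 = (c:ℕ)+(b:ℕ)
  · rw [if_pos hcond, if_pos hcond, if_pos hcond, if_pos hcond]
    have hm : (a:ℕ)+(d:ℕ)+1 ≤ N := by
      have := c.isLt; have := b.isLt; omega
    have hCm : (0:ℝ) < (N.choose ((a:ℕ)+(d:ℕ)+1) : ℝ) := by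
      exact_mod_cast Nat.choose_pos hm
    have hCm' : (0:ℝ) < (N.choose ((a:ℕ)+(d:ℕ)) : ℝ) := by
      exact_mod_cast Nat.choose_pos (by omega)
    have hNad : ((N - ((a:ℕ)+(d:ℕ)) : ℕ) : ℝ) = (N:ℝ) - ((a:ℕ):ℝ) - ((d:ℕ):ℝ) := by
      rw [Nat.cast_sub (by omega)]
      push_cast; ring
    have hrel : (N.choose ((a:ℕ)+(d:ℕ)+1) : ℝ) * (((a:ℕ):ℝ) + ((d:ℕ):ℝ) + 1)
        = (N.choose ((a:ℕ)+(d:ℕ)) : ℝ) * ((N:ℝ) - ((a:ℕ):ℝ) - ((d:ℕ):ℝ)) := by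
      rw [← hNad]
      exact_mod_cast Nat.choose_succ_right_eq N ((a:ℕ)+(d:ℕ))
    have hbc : ((c:ℕ):ℝ) + ((b:ℕ):ℝ) = ((a:ℕ):ℝ) + ((d:ℕ):ℝ) + 1 := by
      exact_mod_cast congrArg (Nat.cast : ℕ → ℝ) hcond.symm
    have hnk : ((N-k:ℕ):ℝ) = (N:ℝ) - (k:ℝ) := by rw [Nat.cast_sub hkN]
    have key2 : ((N:ℝ) - ((a:ℕ):ℝ) - ((d:ℕ):ℝ)) / (N.choose ((a:ℕ)+(d:ℕ)+1) : ℝ)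
        = (((b:ℕ):ℝ) + ((c:ℕ):ℝ)) / (N.choose ((a:ℕ)+(d:ℕ)) : ℝ) := by
      rw [div_eq_div_iff hCm.ne' hCm'.ne']
      linear_combination (-1 : ℝ) * hrel - (N.choose ((a:ℕ)+(d:ℕ)+1) : ℝ) * hbc
    rw [hnk]
    linear_combination (Real.sqrt ((k.choose (a:ℕ) : ℝ) * (k.choose (c:ℕ) : ℝ) *
      ((N-k).choose (b:ℕ) : ℝ) * ((N-k).choose (d:ℕ) : ℝ)) / ((N:ℝ)+1)) * key2
  · rw [if_neg hcond, if_neg hcond, if_neg hcond, if_neg hcond]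

lemma rho_symm (N k : ℕ) : (rho0TA N k)ᵀ = rho0TA N k := by
  ext ⟨a, b⟩ ⟨c, d⟩
  simp only [Matrix.transpose_apply, rho0TA]
  by_cases h : (c:ℕ) + (b:ℕ) = (a:ℕ) + (d:ℕ)
  · rw [if_pos h, if_pos (by omega)]
    rw [show (a:ℕ) + (d:ℕ) = (c:ℕ) + (b:ℕ) from by omega]
    ring
  · rw [if_neg h, if_neg (by omega)]

lemma Mp_tr (N k : ℕ) : (Mp N k)ᵀ = Mm N k := by
  ext ⟨a, b⟩ ⟨c, d⟩
  simp only [Matrix.transpose_apply, Mp, Mm, Matrix.sub_apply, Matrix.kroneckerMap_apply,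
    Matrix.one_apply, Km, Kp]
  congr 1
  · congr 1
    · by_cases h : (a:ℕ) = (c:ℕ) + 1
      · rw [if_pos h.symm, if_pos h]
        have hac : ((a:ℕ):ℝ) = ((c:ℕ):ℝ) + 1 := by exact_mod_cast h
        rw [hac]; congr 1; ring
      · rw [if_neg (fun hh => h hh.symm), if_neg h]
    · by_cases h2 : d = b
      · rw [if_pos h2, if_pos h2.symm]
      · rw [if_neg h2, if_neg (fun hh => h2 hh.symm)]
  · by_cases h3 : c = a
    · rw [if_pos h3, if_pos h3.symm]
      congr 1
      by_cases h4 : (d:ℕ) = (b:ℕ) + 1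
      · rw [if_pos h4, if_pos h4.symm]
        have hdb : ((d:ℕ):ℝ) = ((b:ℕ):ℝ) + 1 := by exact_mod_cast h4
        rw [hdb]; congr 1; ring
      · rw [if_neg h4, if_neg (fun hh => h4 hh.symm)]
    · rw [if_neg h3, if_neg (show ¬ a = c from fun hh => h3 hh.symm), zero_mul, zero_mul]

lemma M0_diag (N k : ℕ) : M0 N k = Matrix.diagonal
    (fun p : Fin (k+1) × Fin (N-k+1) =>
      ((k:ℝ)/2 - ((p.1:ℕ):ℝ)) - (((N-k:ℕ):ℝ)/2 - ((p.2:ℕ):ℝ))) := by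
  ext ⟨a, b⟩ ⟨c, d⟩
  simp only [M0, K0, Matrix.sub_apply, Matrix.kroneckerMap_apply, Matrix.one_apply,
    Matrix.diagonal_apply, Prod.mk.injEq]
  by_cases h1 : a = c <;> by_cases h2 : b = d <;> simp [h1, h2] <;> ring

lemma M0_comm_rho (N k : ℕ) : M0 N k * rho0TA N k = rho0TA N k * M0 N k := by
  rw [M0_diag]
  ext ⟨a, b⟩ ⟨c, d⟩
  rw [Matrix.diagonal_mul, Matrix.mul_diagonal]
  simp only [rho0TA]
  by_cases h : (a:ℕ) + (d:ℕ) = (c:ℕ) + (b:ℕ)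
  · rw [if_pos h]
    have hc : ((a:ℕ):ℝ) + ((d:ℕ):ℝ) = ((c:ℕ):ℝ) + ((b:ℕ):ℝ) := by exact_mod_cast h
    have hf : ((k:ℝ)/2 - ((a:ℕ):ℝ)) - (((N-k:ℕ):ℝ)/2 - ((b:ℕ):ℝ))
        = ((k:ℝ)/2 - ((c:ℕ):ℝ)) - (((N-k:ℕ):ℝ)/2 - ((d:ℕ):ℝ)) := by linarith
    rw [hf]
    ring
  · rw [if_neg h, mul_zero, zero_mul]

lemma Mp_ne (N k : ℕ) (a c : Fin (k+1)) (b d : Fin (N-k+1))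
    (hne : Mp N k (a,b) (c,d) ≠ 0) :
    (((k:ℝ)/2 - ((a:ℕ):ℝ)) - (((N-k:ℕ):ℝ)/2 - ((b:ℕ):ℝ)))
      - (((k:ℝ)/2 - ((c:ℕ):ℝ)) - (((N-k:ℕ):ℝ)/2 - ((d:ℕ):ℝ))) = 1 := by
  simp only [Mp, Matrix.sub_apply, Matrix.kroneckerMap_apply, Matrix.one_apply, Km, Kp] at hne
  by_cases h1 : (a:ℕ) + 1 = (c:ℕ)
  · have h3 : ¬ a = c := by intro hh; rw [hh] at h1; omega
    by_cases h2 : b = d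
    · have hc : ((c:ℕ):ℝ) = ((a:ℕ):ℝ) + 1 := by exact_mod_cast h1.symm
      rw [h2]; rw [hc]; ring
    · simp [h1, h2, h3] at hne
  · by_cases h3 : a = c
    · by_cases h4 : (b:ℕ) = (d:ℕ) + 1
      · have hb : ((b:ℕ):ℝ) = ((d:ℕ):ℝ) + 1 := by exact_mod_cast h4
        rw [h3, hb]; ring
      · simp [h1, h3, h4] at hne
    · simp [h1, h3] at hne

lemma Mm_ne (N k : ℕ) (a c : Fin (k+1)) (b d : Fin (N-k+1))
    (hne : Mm N k (a,b) (c,d) ≠ 0) :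
    (((k:ℝ)/2 - ((a:ℕ):ℝ)) - (((N-k:ℕ):ℝ)/2 - ((b:ℕ):ℝ)))
      - (((k:ℝ)/2 - ((c:ℕ):ℝ)) - (((N-k:ℕ):ℝ)/2 - ((d:ℕ):ℝ))) = -1 := by
  simp only [Mm, Matrix.sub_apply, Matrix.kroneckerMap_apply, Matrix.one_apply, Km, Kp] at hne
  by_cases h1 : (a:ℕ) = (c:ℕ) + 1
  · have h3 : ¬ a = c := by intro hh; rw [hh] at h1; omega
    by_cases h2 : b = d
    · have hc : ((a:ℕ):ℝ) = ((c:ℕ):ℝ) + 1 := by exact_mod_cast h1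
      rw [h2]; rw [hc]; ring
    · simp [h1, h2, h3] at hne
  · by_cases h3 : a = c
    · by_cases h4 : (b:ℕ) + 1 = (d:ℕ)
      · have hb : ((d:ℕ):ℝ) = ((b:ℕ):ℝ) + 1 := by exact_mod_cast h4.symm
        rw [h3, hb]; ring
      · simp [h1, h3, h4] at hne
    · simp [h1, h3] at hne

lemma M0_Mp_comm (N k : ℕ) : M0 N k * Mp N k - Mp N k * M0 N k = Mp N k := by
  ext ⟨a, b⟩ ⟨c, d⟩
  rw [Matrix.sub_apply, M0_diag, Matrix.diagonal_mul, Matrix.mul_diagonal]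
  by_cases hE : Mp N k (a,b) (c,d) = 0
  · rw [hE]; ring
  · have := Mp_ne N k a c b d hE
    linear_combination (Mp N k (a,b) (c,d)) * this

lemma M0_Mm_comm (N k : ℕ) : M0 N k * Mm N k - Mm N k * M0 N k = -(Mm N k) := by
  ext ⟨a, b⟩ ⟨c, d⟩
  rw [Matrix.sub_apply, Matrix.neg_apply, M0_diag, Matrix.diagonal_mul, Matrix.mul_diagonal]
  by_cases hE : Mm N k (a,b) (c,d) = 0
  · rw [hE]; ring
  · have := Mm_ne N k a c b d hE
    linear_combination (Mm N k (a,b) (c,d)) * this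

/-- `[M₀, M₊] = M₊`, `[M₀, M₋] = −M₋`, and `M₊`, `M₋`, `M₀` all
commute with `ρ₀^{T_A}`. -/
theorem M_operator_relations (N k : ℕ) (hk : k ≤ N / 2) :
    M0 N k * Mp N k - Mp N k * M0 N k = Mp N k ∧
    M0 N k * Mm N k - Mm N k * M0 N k = -(Mm N k) ∧
    Mp N k * rho0TA N k = rho0TA N k * Mp N k ∧
    Mm N k * rho0TA N k = rho0TA N k * Mm N k ∧
    M0 N k * rho0TA N k = rho0TA N k * M0 N k := by
  have hkN : k ≤ N := le_trans hk (Nat.div_le_self N 2)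
  have hMp := Mp_comm_rho N k hkN
  refine ⟨M0_Mp_comm N k, M0_Mm_comm N k, hMp, ?_, M0_comm_rho N k⟩
  have h := congrArg Matrix.transpose hMp
  rw [Matrix.transpose_mul, Matrix.transpose_mul, rho_symm, Mp_tr] at h
  exact h.symm
end

section
/- For m ≤ k, the equation M_− |φ⟩ = 0 restricted to the eigenspace of M_0 with eigenvalue μ_m = m − N/2 has a one-dimensional solution space; its normalized solution is |φ⟩ = Σ_{r=0}^{m} d_r |D_k^(k−r)⟩|D_{N−k}^(m−r)⟩ with d_r = sqrt( C(k−r, m−r) C(N−k−m+r, r) / C(k,m) ) · d_0 and d_0 = sqrt( C(k,m) / C(N−m+1, m) ). For m > k there is no nonzero solution. -/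
open Matrix Kronecker

/-- The (normalized) lowest-weight vector
`|φ⟩ = ∑_{r=0}^{m} d_r |D_k^(k−r)⟩|D_{N−k}^(m−r)⟩` with
`d_r = sqrt(C(k−r,m−r) C(N−k−m+r,r)/C(k,m)) · d₀`,
`d₀ = sqrt(C(k,m)/C(N−m+1,m))`.  The component at `(a, b)` corresponds to
`r = k − a` and is nonzero only when `a + m = k + b`. -/
noncomputable def phiSol (N k m : ℕ) : Fin (k+1) × Fin (N-k+1) → ℝ :=
  fun p =>
    if (p.1 : ℕ) + m = k + (p.2 : ℕ) then
      (fun r =>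
        Real.sqrt (((k - r).choose (m - r) * (N - k - m + r).choose r : ℝ) /
            (k.choose m)) *
          Real.sqrt ((k.choose m : ℝ) / ((N - m + 1).choose m)))
        (k - (p.1 : ℕ))
    else 0

section AuxLWS
open Finset

lemma hockey (A m : ℕ) : ∑ r ∈ range (m+1), (A + r).choose r = (A + m + 1).choose m := by
  induction m with
  | zero => simp
  | succ m ih =>
      rw [Finset.sum_range_succ, ih, show A + (m+1) = A + m + 1 from by omega,
        show A + m + 1 + 1 = (A + m + 1) + 1 from by omega, Nat.choose_succ_succ' (A + m + 1) m]

lemma vand2 (A B m : ℕ) :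
    ∑ r ∈ range (m+1), (A + (m - r)).choose (m - r) * (B + r).choose r
      = (A + B + m + 1).choose m := by
  induction B generalizing m with
  | zero =>
      simp only [Nat.zero_add, Nat.choose_self, mul_one]
      rw [← Finset.sum_range_reflect]
      rw [show A + 0 + m + 1 = A + m + 1 from by omega, ← hockey A m]
      apply Finset.sum_congr rfl
      intro r hr
      simp only [Finset.mem_range] at hr
      congr 1 <;> omega
  | succ B ihB =>
      induction m with
      | zero => simp
      | succ m ihm =>
          rw [Finset.sum_range_succ']
          have step : ∀ r ∈ range (m+1),
              (A + (m + 1 - (r+1))).choose (m + 1 - (r+1)) * (B + 1 + (r+1)).choose (r+1)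
              = (A + (m - r)).choose (m - r) * (B + 1 + r).choose r
                + (A + (m + 1 - (r+1))).choose (m+1-(r+1)) * (B + (r+1)).choose (r+1) := by
            intro r hr
            rw [show B + 1 + (r+1) = (B + 1 + r) + 1 from by omega,
              Nat.choose_succ_succ' (B+1+r) r]
            rw [show m + 1 - (r+1) = m - r from by omega,
              show B + 1 + r = B + (r+1) from by omega]
            ring
          rw [Finset.sum_congr rfl step, Finset.sum_add_distrib]
          have e1 : ∑ r ∈ range (m+1), (A + (m - r)).choose (m - r) * (B + 1 + r).choose r
              = (A + (B+1) + m + 1).choose m := ihm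
          have e2 : (∑ r ∈ range (m+1),
                (A + (m + 1 - (r+1))).choose (m+1-(r+1)) * (B + (r+1)).choose (r+1))
              + (A + (m + 1 - 0)).choose (m + 1 - 0) * (B + 1 + 0).choose 0
              = (A + B + (m+1) + 1).choose (m+1) := by
            rw [← ihB (m+1)]
            rw [Finset.sum_range_succ' (fun r => (A + (m + 1 - r)).choose (m+1-r) * (B + r).choose r) (m+1)]
            simp
          rw [e1]
          have pas : (A + (B + 1) + (m + 1) + 1).choose (m + 1)
              = (A + B + (m+1) + 1).choose m + (A + B + (m+1) + 1).choose (m + 1) := by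
            rw [show A + (B+1) + (m+1) + 1 = (A + B + (m+1) + 1) + 1 from by omega,
              Nat.choose_succ_succ' (A + B + (m+1) + 1) m]
          rw [show A + (B+1) + m + 1 = A + B + (m+1) + 1 from by omega, pas]
          omega


lemma Mm_mulVec (N k : ℕ) (v : Fin (k+1) × Fin (N-k+1) → ℝ) (a : Fin (k+1)) (b : Fin (N-k+1)) :
    (Mm N k).mulVec v (a, b)
      = (∑ a' : Fin (k+1), Kp k a a' * v (a', b))
        - ∑ b' : Fin (N-k+1), Km (N-k) b b' * v (a, b') := by
  simp only [Mm, mulVec, dotProduct, Matrix.sub_apply, kroneckerMap_apply, sub_mul]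
  rw [Finset.sum_sub_distrib]
  rw [Fintype.sum_prod_type, Fintype.sum_prod_type]
  congr 1
  · exact Finset.sum_congr rfl fun a' _ => by
      simp [one_apply, mul_ite, ite_mul, Finset.sum_ite_eq']
  · simp [one_apply, mul_ite, ite_mul, Finset.sum_ite_eq', Finset.sum_ite_eq]

lemma M0_mulVec (N k : ℕ) (v : Fin (k+1) × Fin (N-k+1) → ℝ) (a : Fin (k+1)) (b : Fin (N-k+1)) :
    (M0 N k).mulVec v (a, b)
      = (((k:ℝ)/2 - (a:ℕ)) - (((N-k:ℕ):ℝ)/2 - (b:ℕ))) * v (a, b) := by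
  simp [M0, mulVec, dotProduct, Matrix.sub_apply, kroneckerMap_apply, sub_mul,
    Fintype.sum_prod_type, K0, one_apply, mul_ite, ite_mul, Finset.sum_ite_eq',
    Finset.sum_ite_eq, Finset.sum_sub_distrib]

lemma collapse {n : ℕ} (t : ℕ) (g f : Fin n → ℝ) :
    (∑ i : Fin n, (if t = (i:ℕ) then g i else 0) * f i)
      = if ht : t < n then g ⟨t, ht⟩ * f ⟨t, ht⟩ else 0 := by
  split
  case isTrue ht =>
    rw [Finset.sum_eq_single (⟨t, ht⟩ : Fin n)]
    · simp
    · intro i _ hi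
      have : t ≠ (i : ℕ) := fun h => hi (Fin.ext (by simpa using h.symm))
      simp [this]
    · simp
  case isFalse ht =>
    apply Finset.sum_eq_zero
    intro i _
    have : t ≠ (i : ℕ) := fun h => ht (h ▸ i.isLt)
    simp [this]

-- row lemma at a = i.succ
lemma Mm_row_succ (N k : ℕ) (v : Fin (k+1) × Fin (N-k+1) → ℝ) (i : Fin k) (b : Fin (N-k+1)) :
    (Mm N k).mulVec v (i.succ, b)
      = Real.sqrt (((k:ℝ) - (i:ℕ)) * ((i:ℕ)+1)) * v (i.castSucc, b)
        - (if hb : (b:ℕ)+1 < N-k+1 then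
            Real.sqrt ((((b:ℕ)+1):ℝ) * (((N-k:ℕ):ℝ) - ((b:ℕ)+1) + 1)) * v (i.succ, ⟨(b:ℕ)+1, hb⟩)
          else 0) := by
  rw [Mm_mulVec]
  congr 1
  · simp only [Kp, Fin.val_succ]
    have e : ∀ a' : Fin (k+1), (if (i:ℕ)+1 = (a':ℕ)+1 then Real.sqrt (((k:ℝ) - (a':ℕ)) * ((a':ℕ)+1)) else 0)
        = (if (i:ℕ) = (a':ℕ) then Real.sqrt (((k:ℝ) - (a':ℕ)) * ((a':ℕ)+1)) else 0) := by
      intro a'; congr 1; simp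
    simp only [e]
    rw [collapse (i:ℕ) (fun a' => Real.sqrt (((k:ℝ) - (a':ℕ)) * ((a':ℕ)+1))) (fun a' => v (a', b))]
    have ht : (i:ℕ) < k + 1 := by omega
    simp only [dif_pos ht]
    rfl
  · simp only [Km]
    rw [collapse ((b:ℕ)+1) (fun b' => Real.sqrt (((b':ℕ):ℝ) * (((N-k:ℕ):ℝ) - (b':ℕ) + 1))) (fun b' => v (i.succ, b'))]
    split <;> simp

lemma Mm_row_zero (N k : ℕ) (v : Fin (k+1) × Fin (N-k+1) → ℝ) (b : Fin (N-k+1)) :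
    (Mm N k).mulVec v (0, b)
      = - (if hb : (b:ℕ)+1 < N-k+1 then
            Real.sqrt ((((b:ℕ)+1):ℝ) * (((N-k:ℕ):ℝ) - ((b:ℕ)+1) + 1)) * v (0, ⟨(b:ℕ)+1, hb⟩)
          else 0) := by
  rw [Mm_mulVec]
  have h1 : ∀ a' : Fin (k+1), Kp k 0 a' * v (a', b) = 0 := fun a' => by simp [Kp]
  rw [Finset.sum_congr rfl fun a' _ => h1 a', Finset.sum_const_zero, zero_sub, neg_inj]
  simp only [Km]
  rw [collapse ((b:ℕ)+1) (fun b' => Real.sqrt (((b':ℕ):ℝ) * (((N-k:ℕ):ℝ) - (b':ℕ) + 1))) (fun b' => v (0, b'))]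
  split <;> simp

noncomputable def dcoef (N k m r : ℕ) : ℝ :=
  Real.sqrt (((k - r).choose (m - r) * (N - k - m + r).choose r : ℝ) / (k.choose m)) *
    Real.sqrt ((k.choose m : ℝ) / ((N - m + 1).choose m))

lemma dcoef_eq (N k m r : ℕ) (hm : m ≤ k) (hN : 2*k ≤ N) :
    dcoef N k m r = Real.sqrt ((((k - r).choose (m - r) * (N - k - m + r).choose r : ℕ) : ℝ)
      / ((N - m + 1).choose m)) := by
  have hC : (0:ℝ) < (k.choose m : ℝ) := by exact_mod_cast Nat.choose_pos hm
  have hC' : (0:ℝ) < ((N - m + 1).choose m : ℝ) := by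
    exact_mod_cast Nat.choose_pos (by omega)
  rw [dcoef, ← Real.sqrt_mul (by positivity)]
  push_cast
  congr 1
  field_simp

lemma nat_id (k s m r : ℕ) (hm : m ≤ k) (hms : m ≤ s) (hr1 : 1 ≤ r) (hrm : r ≤ m) :
    r * (k - r + 1) * ((k - r).choose (m - r) * (s - m + r).choose r)
      = (m - r + 1) * (s - m + r) * ((k - (r-1)).choose (m - (r-1)) * (s - m + (r-1)).choose (r-1)) := by
  obtain ⟨r', rfl⟩ : ∃ r', r = r' + 1 := ⟨r - 1, by omega⟩
  have hX : (k - r') * ((k - r' - 1).choose (m - r' - 1)) = (k - r').choose (m - r') * (m - r') := by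
    have h1 := Nat.add_one_mul_choose_eq (k - r' - 1) (m - r' - 1)
    rw [show k - r' - 1 + 1 = k - r' from by omega, show m - r' - 1 + 1 = m - r' from by omega] at h1
    exact h1
  have hY : (s - m + r' + 1) * ((s - m + r').choose r') = (s - m + r' + 1).choose (r'+1) * (r'+1) := by
    have h2 := Nat.add_one_mul_choose_eq (s - m + r') r'
    exact h2
  rw [show k - (r'+1) = k - r' - 1 from by omega, show m - (r'+1) = m - r' - 1 from by omega,
    show k - (r'+1-1) = k - r' from by omega, show m - (r'+1-1) = m - r' from by omega,
    show s - m + (r'+1) = s - m + r' + 1 from by omega, show r'+1-1 = r' from by omega,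
    show k - r' - 1 + 1 = k - r' from by omega, show m - r' - 1 + 1 = m - r' from by omega]
  calc (r'+1) * (k - r') * ((k - r' - 1).choose (m - r' - 1) * (s - m + r' + 1).choose (r'+1))
      = (r'+1) * ((k - r') * ((k - r' - 1).choose (m - r' - 1))) * ((s - m + r' + 1).choose (r'+1)) := by
        ring
    _ = (r'+1) * ((k-r').choose (m-r') * (m-r')) * ((s - m + r' + 1).choose (r'+1)) := by rw [hX]
    _ = (m - r') * ((k-r').choose (m-r')) * ((s - m + r' + 1).choose (r'+1) * (r'+1)) := by ring
    _ = (m - r') * ((k-r').choose (m-r')) * ((s - m + r' + 1) * ((s - m + r').choose r')) := by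
        rw [← hY]
    _ = (m-r') * (s-m+r'+1) * ((k-r').choose (m-r') * (s-m+r').choose r') := by ring

lemma dcoef_nonneg (N k m r : ℕ) : 0 ≤ dcoef N k m r :=
  mul_nonneg (Real.sqrt_nonneg _) (Real.sqrt_nonneg _)

lemma dcoef_sq (N k m r : ℕ) (hm : m ≤ k) (hN : 2*k ≤ N) :
    dcoef N k m r ^ 2
      = (((k - r).choose (m - r) * (N - k - m + r).choose r : ℕ) : ℝ) / ((N - m + 1).choose m) := by
  rw [dcoef_eq N k m r hm hN]
  exact Real.sq_sqrt (by positivity)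

lemma dcoef_zero_pos (N k m : ℕ) (hm : m ≤ k) (hN : 2*k ≤ N) : 0 < dcoef N k m 0 := by
  rw [dcoef_eq N k m 0 hm hN]
  apply Real.sqrt_pos.mpr
  apply div_pos
  · have h1 : 0 < (k - 0).choose (m - 0) * (N - k - m + 0).choose 0 := by
      simp [Nat.choose_pos hm]
    exact_mod_cast h1
  · have : 0 < (N - m + 1).choose m := Nat.choose_pos (by omega)
    exact_mod_cast this

lemma dcoef_rec (N k m r : ℕ) (hm : m ≤ k) (hN : 2*k ≤ N) (hr1 : 1 ≤ r) (hrm : r ≤ m) :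
    Real.sqrt ((r * (k - r + 1) : ℕ) : ℝ) * dcoef N k m r
      = Real.sqrt (((m - r + 1) * (N - k - m + r) : ℕ) : ℝ) * dcoef N k m (r - 1) := by
  rw [dcoef_eq N k m r hm hN, dcoef_eq N k m (r-1) hm hN,
    ← Real.sqrt_mul (by positivity), ← Real.sqrt_mul (by positivity)]
  congr 1
  rw [mul_div_assoc', mul_div_assoc']
  congr 1
  have hms : m ≤ N - k := by omega
  have := nat_id k (N-k) m r hm hms hr1 hrm
  exact_mod_cast this

lemma dcoef_rec' (N k m i b : ℕ) (hm : m ≤ k) (hN : 2*k ≤ N) (hik : i < k)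
    (hsup : i + m = k + b) :
    Real.sqrt (((k:ℝ) - i) * ((i:ℝ)+1)) * dcoef N k m (k - i)
      = Real.sqrt (((b:ℝ)+1) * (((N-k:ℕ):ℝ) - ((b:ℝ)+1) + 1)) * dcoef N k m (k - (i+1)) := by
  have hrm : k - i ≤ m := by omega
  have hr1 : 1 ≤ k - i := by omega
  have hb1 : b + 1 ≤ N - k := by omega
  have e1 : ((k:ℝ) - i) * ((i:ℝ)+1) = (((k - i) * (k - (k - i) + 1) : ℕ) : ℝ) := by
    rw [show k - (k - i) = i from by omega]
    push_cast [Nat.cast_sub (by omega : i ≤ k)]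
    try ring
  have e2 : ((b:ℝ)+1) * (((N-k:ℕ):ℝ) - ((b:ℝ)+1) + 1)
      = (((m - (k - i) + 1) * (N - k - m + (k - i)) : ℕ) : ℝ) := by
    rw [show m - (k - i) + 1 = b + 1 from by omega,
      show N - k - m + (k - i) = N - k - b from by omega]
    push_cast [Nat.cast_sub (by omega : b ≤ N - k)]
    try ring
  rw [e1, e2, show k - (i+1) = (k - i) - 1 from by omega]
  exact dcoef_rec N k m (k - i) hm hN hr1 hrm


lemma phiSol_eq (N k m : ℕ) (p : Fin (k+1) × Fin (N-k+1)) :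
    phiSol N k m p
      = if (p.1 : ℕ) + m = k + (p.2 : ℕ) then dcoef N k m (k - (p.1 : ℕ)) else 0 := by
  rfl

lemma phiSol_supp (N k m : ℕ) (p : Fin (k+1) × Fin (N-k+1))
    (h : (p.1 : ℕ) + m ≠ k + (p.2 : ℕ)) : phiSol N k m p = 0 := by
  rw [phiSol_eq, if_neg h]

lemma phi_Mm (N k m : ℕ) (hm : m ≤ k) (hN : 2*k ≤ N) :
    (Mm N k).mulVec (phiSol N k m) = 0 := by
  funext p
  obtain ⟨a, b⟩ := p
  rw [Pi.zero_apply]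
  induction a using Fin.cases with
  | zero =>
      rw [Mm_row_zero, neg_eq_zero]
      split
      case isTrue hb =>
        rw [phiSol_supp N k m _ (by simp; omega), mul_zero]
      case isFalse => rfl
  | succ i =>
      rw [Mm_row_succ]
      by_cases hsup : (i:ℕ) + m = k + (b:ℕ)
      · have hb1 : (b:ℕ) + 1 < N - k + 1 := by omega
        rw [dif_pos hb1]
        rw [phiSol_eq, phiSol_eq]
        rw [if_pos (by simpa using hsup), if_pos (by simp [Fin.val_succ]; omega)]
        simp only [Fin.coe_castSucc, Fin.val_succ]
        rw [sub_eq_zero]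
        exact dcoef_rec' N k m i b hm hN i.isLt hsup
      · rw [phiSol_supp N k m _ (by simpa using hsup), mul_zero, zero_sub, neg_eq_zero]
        split
        next hb =>
          rw [phiSol_supp N k m _ (by simp [Fin.val_succ]; omega), mul_zero]
        next => rfl

lemma M0_eig_iff (N k m : ℕ) (hN : 2*k ≤ N) (v : Fin (k+1) × Fin (N-k+1) → ℝ) :
    (M0 N k).mulVec v = ((m:ℝ) - (N:ℝ)/2) • v ↔
      ∀ p : Fin (k+1) × Fin (N-k+1), ((p.1:ℕ) + m ≠ k + (p.2:ℕ)) → v p = 0 := by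
  have hcast : ((N-k:ℕ):ℝ) = (N:ℝ) - k := by
    push_cast [Nat.cast_sub (by omega : k ≤ N)]
    try ring
  constructor
  · intro h p hp
    obtain ⟨a, b⟩ := p
    have h1 := congrFun h (a, b)
    rw [M0_mulVec, Pi.smul_apply, smul_eq_mul, hcast] at h1
    have h2 : (((k:ℝ) - a) + (b:ℝ) - m) * v (a, b) = 0 := by ring_nf; ring_nf at h1; linarith
    rcases mul_eq_zero.mp h2 with h3 | h3
    · exfalso
      apply hp
      have : ((a:ℕ) : ℝ) + m = k + (b:ℕ) := by linarith
      exact_mod_cast this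
    · exact h3
  · intro h
    funext p
    obtain ⟨a, b⟩ := p
    rw [M0_mulVec, Pi.smul_apply, smul_eq_mul, hcast]
    by_cases hp : (a:ℕ) + m = k + (b:ℕ)
    · have : ((a:ℕ):ℝ) + m = (k:ℝ) + (b:ℕ) := by exact_mod_cast hp
      congr 1
      linarith
    · rw [h _ hp, mul_zero, mul_zero]

lemma phi_norm (N k m : ℕ) (hm : m ≤ k) (hN : 2*k ≤ N) :
    ∑ p : Fin (k+1) × Fin (N-k+1), (phiSol N k m p)^2 = 1 := by
  have h1 : ∀ p : Fin (k+1) × Fin (N-k+1), (phiSol N k m p)^2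
      = if (p.1 : ℕ) + m = k + (p.2 : ℕ) then dcoef N k m (k - (p.1:ℕ)) ^ 2 else 0 := by
    intro p
    rw [phiSol_eq]
    split <;> simp
  rw [Finset.sum_congr rfl fun p _ => h1 p, ← Finset.sum_filter]
  have hbij : ∑ p ∈ Finset.filter
        (fun p : Fin (k+1) × Fin (N-k+1) => (p.1:ℕ) + m = k + (p.2:ℕ)) Finset.univ,
        dcoef N k m (k - (p.1:ℕ)) ^ 2
      = ∑ r ∈ Finset.range (m+1), dcoef N k m r ^ 2 := by
    refine Finset.sum_nbij' (fun p => k - (p.1 : ℕ))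
      (fun r => ((⟨k - r, by omega⟩ : Fin (k+1)), (⟨m - r, by omega⟩ : Fin (N-k+1))))
      ?_ ?_ ?_ ?_ ?_
    · intro p hp
      simp only [Finset.mem_filter, Finset.mem_univ, true_and] at hp
      simp only [Finset.mem_range]
      omega
    · intro r hr
      simp only [Finset.mem_range] at hr
      simp only [Finset.mem_filter, Finset.mem_univ, true_and]
      show (k - r : ℕ) + m = k + (m - r)
      omega
    · intro p hp
      simp only [Finset.mem_filter, Finset.mem_univ, true_and] at hp
      have h5 : (p.1 : ℕ) ≤ k := by omega
      have e1 : ((⟨k - (k - (p.1:ℕ)), by omega⟩ : Fin (k+1)),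
          (⟨m - (k - (p.1:ℕ)), by omega⟩ : Fin (N-k+1))) = (p.1, p.2) := by
        rw [Prod.mk.injEq]
        exact ⟨Fin.ext (by simp; omega), Fin.ext (by simp; omega)⟩
      exact e1.trans rfl
    · intro r hr
      simp only [Finset.mem_range] at hr
      show k - (k - r) = r
      omega
    · intro p hp
      rfl
  rw [hbij]
  have h2 : ∀ r ∈ Finset.range (m+1), dcoef N k m r ^ 2
      = (((k - r).choose (m - r) * (N - k - m + r).choose r : ℕ) : ℝ)
          / ((N - m + 1).choose m) :=
    fun r _ => dcoef_sq N k m r hm hN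
  rw [Finset.sum_congr rfl h2, ← Finset.sum_div, ← Nat.cast_sum]
  have h3 : ∑ r ∈ Finset.range (m+1), (k - r).choose (m - r) * (N - k - m + r).choose r
      = (N - m + 1).choose m := by
    have h4 : ∀ r ∈ Finset.range (m+1), (k - r).choose (m - r) * (N - k - m + r).choose r
        = ((k-m) + (m - r)).choose (m - r) * ((N-k-m) + r).choose r := by
      intro r hr
      simp only [Finset.mem_range] at hr
      rw [show (k-m) + (m-r) = k - r from by omega]
    rw [Finset.sum_congr rfl h4, vand2 (k-m) (N-k-m) m,
      show k - m + (N-k-m) + m + 1 = N - m + 1 from by omega]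
  rw [h3]
  have hC : (0:ℝ) < ((N - m + 1).choose m : ℝ) := by
    exact_mod_cast Nat.choose_pos (by omega : m ≤ N - m + 1)
  field_simp

lemma Mm_row_succ'' (N k : ℕ) (v : Fin (k+1) × Fin (N-k+1) → ℝ) (a b : ℕ)
    (ha : a < k) (hb : b + 1 ≤ N - k) :
    (Mm N k).mulVec v (⟨a+1, by omega⟩, ⟨b, by omega⟩)
      = Real.sqrt (((k:ℝ) - a) * ((a:ℝ)+1)) * v (⟨a, by omega⟩, ⟨b, by omega⟩)
        - Real.sqrt (((b:ℝ)+1) * (((N-k:ℕ):ℝ) - ((b:ℝ)+1) + 1))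
            * v (⟨a+1, by omega⟩, ⟨b+1, by omega⟩) := by
  have h := Mm_row_succ N k v ⟨a, ha⟩ ⟨b, by omega⟩
  simp only [Fin.succ_mk, Fin.castSucc_mk] at h
  rw [h]
  congr 1
  have hcond : (b : ℕ) + 1 < N - k + 1 := by omega
  rw [dif_pos hcond]

lemma Mm_row_zero'' (N k : ℕ) (v : Fin (k+1) × Fin (N-k+1) → ℝ) (b : ℕ)
    (hb : b + 1 ≤ N - k) :
    (Mm N k).mulVec v (⟨0, by omega⟩, ⟨b, by omega⟩)
      = - (Real.sqrt (((b:ℝ)+1) * (((N-k:ℕ):ℝ) - ((b:ℝ)+1) + 1))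
            * v (⟨0, by omega⟩, ⟨b+1, by omega⟩)) := by
  have h := Mm_row_zero N k v ⟨b, by omega⟩
  rw [show (⟨0, by omega⟩ : Fin (k+1)) = 0 from rfl, h]
  congr 1
  have hcond : (b : ℕ) + 1 < N - k + 1 := by omega
  rw [dif_pos hcond]

lemma sqrtB_pos (N k b : ℕ) (hb : b + 1 ≤ N - k) :
    0 < Real.sqrt (((b:ℝ)+1) * (((N-k:ℕ):ℝ) - ((b:ℝ)+1) + 1)) := by
  apply Real.sqrt_pos.mpr
  have h1 : ((b:ℝ)+1) ≤ ((N-k:ℕ):ℝ) := by exact_mod_cast hb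
  have h2 : (0:ℝ) < (b:ℝ)+1 := by positivity
  nlinarith

lemma sqrtA_pos (k a : ℕ) (ha : a < k) :
    0 < Real.sqrt (((k:ℝ) - a) * ((a:ℝ)+1)) := by
  apply Real.sqrt_pos.mpr
  have h1 : ((a:ℝ)+1) ≤ (k:ℝ) := by exact_mod_cast ha
  have h2 : (0:ℝ) < (a:ℝ)+1 := by positivity
  nlinarith

lemma Mm_unique (N k m : ℕ) (hm : m ≤ k) (hN : 2*k ≤ N) (v : Fin (k+1) × Fin (N-k+1) → ℝ)
    (hMm : (Mm N k).mulVec v = 0)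
    (hsupp : ∀ p : Fin (k+1) × Fin (N-k+1), (p.1:ℕ) + m ≠ k + (p.2:ℕ) → v p = 0) :
    v = (v (⟨k, by omega⟩, ⟨m, by omega⟩) / dcoef N k m 0) • phiSol N k m := by
  set c := v (⟨k, by omega⟩, ⟨m, by omega⟩) / dcoef N k m 0 with hc
  have hd0 : dcoef N k m 0 ≠ 0 := ne_of_gt (dcoef_zero_pos N k m hm hN)
  have key : ∀ r, r ≤ m →
      v (⟨k - r, by omega⟩, ⟨m - r, by omega⟩) = c * dcoef N k m r := by
    intro r
    induction r with
    | zero =>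
        intro _
        have e : ((⟨k - 0, by omega⟩ : Fin (k+1)), (⟨m - 0, by omega⟩ : Fin (N-k+1)))
            = ((⟨k, by omega⟩ : Fin (k+1)), (⟨m, by omega⟩ : Fin (N-k+1))) := by
          rw [Prod.mk.injEq]
          exact ⟨Fin.ext (by simp), Fin.ext (by simp)⟩
        rw [e, hc, div_mul_cancel₀ _ hd0]
    | succ r ih =>
        intro hr1
        have ihv := ih (by omega)
        have hz := (Mm_row_succ'' N k v (k - (r+1)) (m - (r+1)) (by omega) (by omega)).symm.trans
          (congrFun hMm _)
        simp only [Pi.zero_apply] at hz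
        have e2 : ((⟨k - (r+1) + 1, by omega⟩ : Fin (k+1)),
            (⟨m - (r+1) + 1, by omega⟩ : Fin (N-k+1)))
            = ((⟨k - r, by omega⟩ : Fin (k+1)), (⟨m - r, by omega⟩ : Fin (N-k+1))) := by
          rw [Prod.mk.injEq]
          exact ⟨Fin.ext (by simp; omega), Fin.ext (by simp; omega)⟩
        rw [e2, ihv, sub_eq_zero] at hz
        have hphi := dcoef_rec' N k m (k - (r+1)) (m - (r+1)) hm hN (by omega) (by omega)
        rw [show k - (k - (r+1)) = r + 1 from by omega,
          show k - (k - (r+1) + 1) = r from by omega] at hphi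
        have hA := sqrtA_pos k (k - (r+1)) (by omega)
        apply mul_left_cancel₀ (ne_of_gt hA)
        rw [hz]
        linear_combination (-c) * hphi
  funext p
  obtain ⟨a, b⟩ := p
  rw [Pi.smul_apply, smul_eq_mul, phiSol_eq]
  by_cases hp : (a:ℕ) + m = k + (b:ℕ)
  · rw [if_pos hp]
    have hr : k - (a:ℕ) ≤ m := by omega
    have hkey := key (k - (a:ℕ)) hr
    have e3 : ((⟨k - (k - (a:ℕ)), by omega⟩ : Fin (k+1)),
        (⟨m - (k - (a:ℕ)), by omega⟩ : Fin (N-k+1))) = (a, b) := by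
      rw [Prod.mk.injEq]
      exact ⟨Fin.ext (by simp; omega), Fin.ext (by simp; omega)⟩
    rw [e3] at hkey
    exact hkey
  · rw [if_neg hp, mul_zero]
    exact hsupp _ hp


lemma Mm_unique_gt (N k m : ℕ) (hm : k < m) (hN : 2*k ≤ N) (v : Fin (k+1) × Fin (N-k+1) → ℝ)
    (hMm : (Mm N k).mulVec v = 0)
    (hsupp : ∀ p : Fin (k+1) × Fin (N-k+1), (p.1:ℕ) + m ≠ k + (p.2:ℕ) → v p = 0) :
    v = 0 := by
  have key : ∀ a : ℕ, ∀ (ha : a ≤ k) (hbb : a + m - k ≤ N - k),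
      v (⟨a, by omega⟩, ⟨a + m - k, by omega⟩) = 0 := by
    intro a
    induction a with
    | zero =>
        intro _ hbb
        have hb1 : (m - k - 1) + 1 ≤ N - k := by omega
        have hz := (Mm_row_zero'' N k v (m - k - 1) hb1).symm.trans (congrFun hMm _)
        simp only [Pi.zero_apply, neg_eq_zero] at hz
        have hB := sqrtB_pos N k (m - k - 1) hb1
        have hv := (mul_eq_zero.mp hz).resolve_left (ne_of_gt hB)
        have e : ((⟨0, by omega⟩ : Fin (k+1)), (⟨m - k - 1 + 1, by omega⟩ : Fin (N-k+1)))
            = ((⟨0, by omega⟩ : Fin (k+1)), (⟨0 + m - k, by omega⟩ : Fin (N-k+1))) := by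
          rw [Prod.mk.injEq]
          exact ⟨rfl, Fin.ext (by simp; omega)⟩
        rw [e] at hv
        exact hv
    | succ a ih =>
        intro ha hbb
        have hb1 : (a + m - k) + 1 ≤ N - k := by omega
        have hz := (Mm_row_succ'' N k v a (a + m - k) (by omega) hb1).symm.trans
          (congrFun hMm _)
        simp only [Pi.zero_apply] at hz
        rw [ih (by omega) (by omega), mul_zero, zero_sub, neg_eq_zero] at hz
        have hB := sqrtB_pos N k (a + m - k) hb1
        have hv := (mul_eq_zero.mp hz).resolve_left (ne_of_gt hB)
        have e2 : ((⟨a + 1, by omega⟩ : Fin (k+1)),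
            (⟨a + m - k + 1, by omega⟩ : Fin (N-k+1)))
            = ((⟨a + 1, by omega⟩ : Fin (k+1)), (⟨a + 1 + m - k, by omega⟩ : Fin (N-k+1))) := by
          rw [Prod.mk.injEq]
          exact ⟨rfl, Fin.ext (by simp; omega)⟩
        rw [e2] at hv
        exact hv
  funext p
  obtain ⟨a, b⟩ := p
  rw [Pi.zero_apply]
  by_cases hp : (a:ℕ) + m = k + (b:ℕ)
  · have hkey := key (a:ℕ) (by omega) (by omega)
    have e3 : ((⟨(a:ℕ), by omega⟩ : Fin (k+1)),
        (⟨(a:ℕ) + m - k, by omega⟩ : Fin (N-k+1))) = (a, b) := by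
      rw [Prod.mk.injEq]
      exact ⟨Fin.ext (by simp), Fin.ext (by simp; omega)⟩
    rw [e3] at hkey
    exact hkey
  · exact hsupp _ hp

end AuxLWS

/-- for `m ≤ k`, the solutions of `M₋|φ⟩ = 0` within the
`μ_m = m − N/2` eigenspace of `M₀` form a one-dimensional space, spanned by
the normalized vector `phiSol`; for `m > k` there is no nonzero solution. -/
theorem lowest_weight_solution (N k m : ℕ) (hk : k ≤ N / 2) :
    (m ≤ k →
      ({v : Fin (k+1) × Fin (N-k+1) → ℝ |
          (Mm N k).mulVec v = 0 ∧ (M0 N k).mulVec v = ((m : ℝ) - (N : ℝ) / 2) • v} =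
        {v | ∃ c : ℝ, v = c • phiSol N k m}) ∧
      ∑ p : Fin (k+1) × Fin (N-k+1), (phiSol N k m p) ^ 2 = 1) ∧
    (k < m →
      {v : Fin (k+1) × Fin (N-k+1) → ℝ |
          (Mm N k).mulVec v = 0 ∧ (M0 N k).mulVec v = ((m : ℝ) - (N : ℝ) / 2) • v} =
        {0}) := by
  have hN : 2*k ≤ N := by omega
  constructor
  · intro hm
    constructor
    · ext v
      simp only [Set.mem_setOf_eq]
      constructor
      · rintro ⟨h1, h2⟩
        exact ⟨_, Mm_unique N k m hm hN v h1 ((M0_eig_iff N k m hN v).mp h2)⟩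
      · rintro ⟨c, rfl⟩
        refine ⟨?_, ?_⟩
        · rw [Matrix.mulVec_smul, phi_Mm N k m hm hN, smul_zero]
        · rw [Matrix.mulVec_smul,
            (M0_eig_iff N k m hN (phiSol N k m)).mpr (fun p hp => phiSol_supp N k m p hp),
            smul_comm]
    · exact phi_norm N k m hm hN
  · intro hm
    ext v
    simp only [Set.mem_setOf_eq, Set.mem_singleton_iff]
    constructor
    · rintro ⟨h1, h2⟩
      exact Mm_unique_gt N k m hm hN v h1 ((M0_eig_iff N k m hN v).mp h2)
    · rintro rfl
      exact ⟨Matrix.mulVec_zero _, by rw [Matrix.mulVec_zero, smul_zero]⟩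
end

section
/- Σ_{r=0}^{n} C(k+n−r−s, n−r) · C(N−k−n+r+s, r) = C(N+1, n) for all integers 0 ≤ s ≤ n ≤ k ≤ N−n. -/
lemma hs_aux' (a : ℕ) : ∀ n, ∑ m ∈ Finset.range (n + 1), (a + m).choose m = (a + n + 1).choose n := by
  intro n
  induction n with
  | zero => simp
  | succ n ih =>
    rw [Finset.sum_range_succ, ih]
    have e : a + (n + 1) + 1 = (a + n + 1) + 1 := by omega
    rw [e, Nat.choose_succ_succ (a + n + 1) n]
    rfl

lemma hs_aux (a m : ℕ) : ∑ r ∈ Finset.range (m + 1), (a + (m - r)).choose (m - r) = (a + m + 1).choose m := by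
  have := Finset.sum_range_reflect (fun x => (a + x).choose x) (m + 1)
  simp only [Nat.add_sub_cancel] at this
  rw [this]
  exact hs_aux' a m

lemma conv_aux (a : ℕ) : ∀ n b, ∑ r ∈ Finset.range (n + 1),
    (a + (n - r)).choose (n - r) * (b + r).choose r = (a + b + n + 1).choose n := by
  intro n
  induction n with
  | zero => intro b; simp
  | succ n ih =>
    intro b
    induction b with
    | zero =>
      have h0 : ∀ r ∈ Finset.range (n + 1 + 1),
          (a + (n + 1 - r)).choose (n + 1 - r) * (0 + r).choose r
          = (a + (n + 1 - r)).choose (n + 1 - r) := by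
        intro r _; simp
      rw [Finset.sum_congr rfl h0, hs_aux a (n + 1)]
      norm_num
    | succ b ihb =>
      rw [Finset.sum_range_succ']
      have h1 : ∀ i ∈ Finset.range (n + 1),
          (a + (n + 1 - (i + 1))).choose (n + 1 - (i + 1)) * (b + 1 + (i + 1)).choose (i + 1)
          = (a + (n - i)).choose (n - i) * ((b + 1 + i).choose i + (b + 1 + i).choose (i + 1)) := by
        intro i _
        have e1 : n + 1 - (i + 1) = n - i := by omega
        have e2 : b + 1 + (i + 1) = (b + 1 + i) + 1 := by omega
        rw [e1, e2, Nat.choose_succ_succ (b + 1 + i) i]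
      rw [Finset.sum_congr rfl h1]
      simp only [Nat.mul_add]
      rw [Finset.sum_add_distrib]
      have h2 : ∑ i ∈ Finset.range (n + 1),
          (a + (n - i)).choose (n - i) * (b + 1 + i).choose i = (a + (b + 1) + n + 1).choose n :=
        ih (b + 1)
      have h3 : (∑ i ∈ Finset.range (n + 1),
          (a + (n - i)).choose (n - i) * (b + 1 + i).choose (i + 1))
          + (a + (n + 1 - 0)).choose (n + 1 - 0) * (b + 1 + 0).choose 0
          = (a + b + (n + 1) + 1).choose (n + 1) := by
        rw [Finset.sum_range_succ'] at ihb
        rw [← ihb]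
        congr 1
        · apply Finset.sum_congr rfl
          intro i _
          have e1 : n + 1 - (i + 1) = n - i := by omega
          have e2 : b + (i + 1) = b + 1 + i := by omega
          rw [e1, e2]
        · simp
      rw [h2, add_assoc, h3]
      have e1 : a + (b + 1) + n + 1 = a + b + n + 2 := by omega
      have e2 : a + b + (n + 1) + 1 = a + b + n + 2 := by omega
      have e3 : a + (b + 1) + (n + 1) + 1 = (a + b + n + 2) + 1 := by omega
      rw [e1, e2, e3, Nat.choose_succ_succ (a + b + n + 2) n]

/-- `∑_{r=0}^{n} C(k+n−r−s, n−r) C(N−k−n+r+s, r) = C(N+1, n)`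
for `0 ≤ s ≤ n ≤ k ≤ N − n`. -/
theorem key_binomial_sum (N k n s : ℕ) (hs : s ≤ n) (hn : n ≤ k) (hk : k + n ≤ N) :
    ∑ r ∈ Finset.range (n + 1),
        (k + n - r - s).choose (n - r) * (N - k - n + r + s).choose r =
      (N + 1).choose n := by
  have h := conv_aux (k - s) n (N - k - n + s)
  have hcongr : ∀ r ∈ Finset.range (n + 1),
      (k + n - r - s).choose (n - r) * (N - k - n + r + s).choose r
      = ((k - s) + (n - r)).choose (n - r) * ((N - k - n + s) + r).choose r := by
    intro r hr
    rw [Finset.mem_range] at hr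
    have e1 : k + n - r - s = (k - s) + (n - r) := by omega
    have e2 : N - k - n + r + s = (N - k - n + s) + r := by omega
    rw [e1, e2]
  rw [Finset.sum_congr rfl hcongr, h]
  congr 1
  omega
end

section
/- The normalization identity Σ_{r=0}^{m} C(k−r, m−r) C(N−k−m+r, r) = C(N−m+1, m) holds for all integers 0 ≤ m ≤ k ≤ N−m. -/
lemma choose_add_symm (a b : ℕ) : (a + b).choose a = (a + b).choose b := by
  have h := Nat.choose_symm (Nat.le_add_right a b)
  rw [Nat.add_sub_cancel_left] at h
  exact h.symm

/-- Hockey stick identity in `range` form. -/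
lemma hockey_stick (c n : ℕ) :
    ∑ t ∈ Finset.range (n + 1), (c + t).choose c = (c + n + 1).choose (c + 1) := by
  induction n with
  | zero => simp
  | succ n ih =>
      rw [Finset.sum_range_succ, ih,
        show c + (n + 1) + 1 = (c + n + 1) + 1 from rfl,
        Nat.choose_succ_succ (c + n + 1) c]
      simp only [Nat.succ_eq_add_one, show c + (n + 1) = c + n + 1 from rfl]
      omega

/-- The key identity `∑_{i+j=m} C(a+i,a) C(b+j,b) = C(a+b+m+1, a+b+1)`. -/
lemma aux_identity (a : ℕ) : ∀ b m : ℕ,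
    ∑ r ∈ Finset.range (m + 1), (a + r).choose a * (b + (m - r)).choose b =
      (a + b + m + 1).choose (a + b + 1) := by
  induction a with
  | zero =>
      intro b m
      have h1 : ∑ r ∈ Finset.range (m + 1), (0 + r).choose 0 * (b + (m - r)).choose b
          = ∑ r ∈ Finset.range (m + 1), (b + (m - r)).choose b := by
        apply Finset.sum_congr rfl; intro r _; simp
      have h2 := Finset.sum_range_reflect (fun r => (b + r).choose b) (m + 1)
      simp only [Nat.add_sub_cancel] at h2
      rw [h1, h2, hockey_stick]
      congr 1 <;> omega
  | succ a ih =>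
      intro b m
      have step : ∀ r ∈ Finset.range (m + 1),
          (a + 1 + r).choose (a + 1) * (b + (m - r)).choose b
            = ∑ s ∈ Finset.Ico 0 (r + 1),
                (a + s).choose a * (b + (m - r)).choose b := by
        intro r _
        rw [← Finset.sum_mul]
        congr 1
        have hs := hockey_stick a r
        rw [Finset.range_eq_Ico] at hs
        rw [hs]; congr 1; omega
      rw [Finset.sum_congr rfl step, Finset.range_eq_Ico,
        ← Finset.sum_Ico_Ico_comm 0 (m + 1)
          (fun s r => (a + s).choose a * (b + (m - r)).choose b)]
      have inner : ∀ s ∈ Finset.Ico 0 (m + 1),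
          ∑ r ∈ Finset.Ico s (m + 1), (a + s).choose a * (b + (m - r)).choose b
            = (a + s).choose a * ((b + 1) + (m - s)).choose (b + 1) := by
        intro s hs
        simp only [Finset.mem_Ico] at hs
        rw [← Finset.mul_sum]
        congr 1
        rw [Finset.sum_Ico_eq_sum_range]
        have hms : m + 1 - s = (m - s) + 1 := by omega
        rw [hms]
        rw [← Finset.sum_range_reflect (fun u => (b + (m - (s + u))).choose b) (m - s + 1)]
        have h3 : ∀ u ∈ Finset.range (m - s + 1),
            (b + (m - (s + (m - s + 1 - 1 - u)))).choose b = (b + u).choose b := by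
          intro u hu
          simp only [Finset.mem_range] at hu
          congr 2; omega
        rw [Finset.sum_congr rfl h3, hockey_stick]
        congr 1; omega
      rw [Finset.sum_congr rfl inner, ← Finset.range_eq_Ico, ih (b + 1) m]
      congr 1 <;> omega

/-- the normalization identity
`∑_{r=0}^{m} C(k−r, m−r) C(N−k−m+r, r) = C(N−m+1, m)` for `0 ≤ m ≤ k ≤ N − m`. -/
theorem normalization_identity (N k m : ℕ) (hm : m ≤ k) (hk : k + m ≤ N) :
    ∑ r ∈ Finset.range (m + 1),
        (k - r).choose (m - r) * (N - k - m + r).choose r =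
      (N - m + 1).choose m := by
  have key := aux_identity (k - m) (N - k - m) m
  rw [← Finset.sum_range_reflect
    (fun r => (k - r).choose (m - r) * (N - k - m + r).choose r) (m + 1)]
  have h1 : ∀ r ∈ Finset.range (m + 1),
      (k - (m + 1 - 1 - r)).choose (m - (m + 1 - 1 - r)) *
          (N - k - m + (m + 1 - 1 - r)).choose (m + 1 - 1 - r)
        = (k - m + r).choose (k - m) * (N - k - m + (m - r)).choose (N - k - m) := by
    intro r hr
    simp only [Finset.mem_range] at hr
    have e1 : k - (m + 1 - 1 - r) = k - m + r := by omega
    have e2 : m - (m + 1 - 1 - r) = r := by omega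
    have e3 : N - k - m + (m + 1 - 1 - r) = N - k - m + (m - r) := by omega
    have e4 : m + 1 - 1 - r = m - r := by omega
    rw [e1, e2, e3, e4]
    congr 1
    · rw [← choose_add_symm (k - m) r]
    · rw [choose_add_symm (N - k - m) (m - r)]
  rw [Finset.sum_congr rfl h1, key]
  have h5 := Nat.choose_symm (show m ≤ N - m + 1 by omega)
  rw [show N - m + 1 - m = N - 2 * m + 1 by omega] at h5
  rw [show k - m + (N - k - m) + m + 1 = N - m + 1 by omega,
    show k - m + (N - k - m) + 1 = N - 2 * m + 1 by omega]
  exact h5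
end

section
/- Let |ψ⟩ ∈ H_A ⊗ H_B be a pure state with Schmidt decomposition |ψ⟩ = Σ_r sqrt(Γ_r) |φ_r^A⟩|φ_r^B⟩ with Γ_1 ≥ Γ_2 ≥ … ≥ 0. Then the minimum eigenvalue of the partial transpose (|ψ⟩⟨ψ|)^{T_A} is −sqrt(Γ_1 Γ_2). -/
open Matrix

open Finset in
noncomputable section
namespace PT16
variable {a b n : ℕ}

def uvec (φA : Fin n → Fin a → ℂ) (φB : Fin n → Fin b → ℂ) (k : Fin n × Fin n) :
    EuclideanSpace ℂ (Fin a × Fin b) :=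
  WithLp.toLp 2 (fun q : Fin a × Fin b => (starRingEnd ℂ) (φA k.1 q.1) * φB k.2 q.2)

lemma uvec_inner (φA : Fin n → Fin a → ℂ) (φB : Fin n → Fin b → ℂ)
    (k k' : Fin n × Fin n) :
    (inner ℂ (uvec φA φB k) (uvec φA φB k') : ℂ) =
      (starRingEnd ℂ) (∑ i, (starRingEnd ℂ) (φA k.1 i) * φA k'.1 i) *
      (∑ j, (starRingEnd ℂ) (φB k.2 j) * φB k'.2 j) := by
  simp only [PiLp.inner_apply, RCLike.inner_apply, uvec, map_sum, _root_.map_mul,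
    Complex.conj_conj]
  rw [Fintype.sum_prod_type, Finset.sum_mul_sum]
  apply Finset.sum_congr rfl; intro i _
  apply Finset.sum_congr rfl; intro j _
  ring

lemma uvec_orthonormal (φA : Fin n → Fin a → ℂ) (φB : Fin n → Fin b → ℂ)
    (hA : ∀ r r', ∑ i, (starRingEnd ℂ) (φA r i) * φA r' i = if r = r' then 1 else 0)
    (hB : ∀ r r', ∑ i, (starRingEnd ℂ) (φB r i) * φB r' i = if r = r' then 1 else 0) :
    Orthonormal ℂ (uvec φA φB) := by
  rw [orthonormal_iff_ite]
  intro k k'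
  rw [uvec_inner, hA, hB]
  by_cases h1 : k.1 = k'.1 <;> by_cases h2 : k.2 = k'.2 <;>
    simp [h1, h2, Prod.ext_iff]

lemma rho_expand (φA : Fin n → Fin a → ℂ) (φB : Fin n → Fin b → ℂ)
    (Γ : Fin n → ℝ) (ψ : Fin a × Fin b → ℂ)
    (hψ : ψ = fun p => ∑ r, (Real.sqrt (Γ r) : ℂ) * φA r p.1 * φB r p.2)
    (p q : Fin a × Fin b) :
    ψ (q.1, p.2) * (starRingEnd ℂ) (ψ (p.1, q.2)) =
      ∑ k : Fin n × Fin n, ((Real.sqrt (Γ k.1) : ℂ) * (Real.sqrt (Γ k.2) : ℂ)) *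
        uvec φA φB (k.2, k.1) p * (starRingEnd ℂ) (uvec φA φB k q) := by
  subst hψ
  simp only
  rw [map_sum, Finset.sum_mul_sum, Fintype.sum_prod_type]
  apply Finset.sum_congr rfl; intro r _
  apply Finset.sum_congr rfl; intro t _
  simp only [uvec, _root_.map_mul, Complex.conj_conj, Complex.conj_ofReal]
  ring

lemma mulVec_eq (φA : Fin n → Fin a → ℂ) (φB : Fin n → Fin b → ℂ)
    (Γ : Fin n → ℝ) (ψ : Fin a × Fin b → ℂ)
    (hψ : ψ = fun p => ∑ r, (Real.sqrt (Γ r) : ℂ) * φA r p.1 * φB r p.2)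
    (ρTA : Matrix (Fin a × Fin b) (Fin a × Fin b) ℂ)
    (hρ : ρTA = fun p q => ψ (q.1, p.2) * (starRingEnd ℂ) (ψ (p.1, q.2)))
    (v : EuclideanSpace ℂ (Fin a × Fin b)) (p : Fin a × Fin b) :
    ρTA.mulVec v p =
      ∑ k : Fin n × Fin n, ((Real.sqrt (Γ k.1) : ℂ) * (Real.sqrt (Γ k.2) : ℂ)) *
        (inner ℂ (uvec φA φB k) v : ℂ) * uvec φA φB (k.2, k.1) p := by
  subst hρ
  simp only [mulVec, dotProduct, of_apply]
  calc (∑ q, ψ (q.1, p.2) * (starRingEnd ℂ) (ψ (p.1, q.2)) * v q)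
      = ∑ q, ∑ k : Fin n × Fin n,
          ((Real.sqrt (Γ k.1) : ℂ) * (Real.sqrt (Γ k.2) : ℂ)) *
            uvec φA φB (k.2, k.1) p * (starRingEnd ℂ) (uvec φA φB k q) * v q := by
        apply Finset.sum_congr rfl; intro q _
        rw [rho_expand φA φB Γ ψ hψ, Finset.sum_mul]
    _ = ∑ k : Fin n × Fin n, ∑ q,
          ((Real.sqrt (Γ k.1) : ℂ) * (Real.sqrt (Γ k.2) : ℂ)) *
            uvec φA φB (k.2, k.1) p * (starRingEnd ℂ) (uvec φA φB k q) * v q :=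
        Finset.sum_comm
    _ = _ := by
        apply Finset.sum_congr rfl; intro k _
        simp only [PiLp.inner_apply, RCLike.inner_apply, Finset.mul_sum,
          Finset.sum_mul]
        apply Finset.sum_congr rfl; intro q _
        ring

lemma mulVec_uvec (φA : Fin n → Fin a → ℂ) (φB : Fin n → Fin b → ℂ)
    (hA : ∀ r r', ∑ i, (starRingEnd ℂ) (φA r i) * φA r' i = if r = r' then 1 else 0)
    (hB : ∀ r r', ∑ i, (starRingEnd ℂ) (φB r i) * φB r' i = if r = r' then 1 else 0)
    (Γ : Fin n → ℝ) (ψ : Fin a × Fin b → ℂ)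
    (hψ : ψ = fun p => ∑ r, (Real.sqrt (Γ r) : ℂ) * φA r p.1 * φB r p.2)
    (ρTA : Matrix (Fin a × Fin b) (Fin a × Fin b) ℂ)
    (hρ : ρTA = fun p q => ψ (q.1, p.2) * (starRingEnd ℂ) (ψ (p.1, q.2)))
    (k₀ : Fin n × Fin n) :
    ρTA.mulVec (uvec φA φB k₀) =
      ((Real.sqrt (Γ k₀.1) : ℂ) * (Real.sqrt (Γ k₀.2) : ℂ)) • uvec φA φB (k₀.2, k₀.1) := by
  have hon := (orthonormal_iff_ite.mp (uvec_orthonormal φA φB hA hB))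
  funext p
  rw [mulVec_eq φA φB Γ ψ hψ ρTA hρ]
  simp only [hon]
  simp [mul_ite, ite_mul, Finset.sum_ite_eq', Pi.smul_apply, smul_eq_mul]

lemma inner_rho (φA : Fin n → Fin a → ℂ) (φB : Fin n → Fin b → ℂ)
    (Γ : Fin n → ℝ) (ψ : Fin a × Fin b → ℂ)
    (hψ : ψ = fun p => ∑ r, (Real.sqrt (Γ r) : ℂ) * φA r p.1 * φB r p.2)
    (ρTA : Matrix (Fin a × Fin b) (Fin a × Fin b) ℂ)
    (hρ : ρTA = fun p q => ψ (q.1, p.2) * (starRingEnd ℂ) (ψ (p.1, q.2)))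
    (v : EuclideanSpace ℂ (Fin a × Fin b)) :
    (inner ℂ v (WithLp.toLp 2 (ρTA.mulVec v) : EuclideanSpace ℂ (Fin a × Fin b)) : ℂ) =
      ∑ k : Fin n × Fin n, ((Real.sqrt (Γ k.1) : ℂ) * (Real.sqrt (Γ k.2) : ℂ)) *
        ((starRingEnd ℂ) (inner ℂ (uvec φA φB (k.2, k.1)) v : ℂ) *
          (inner ℂ (uvec φA φB k) v : ℂ)) := by
  have expand : (inner ℂ v (WithLp.toLp 2 (ρTA.mulVec v) : EuclideanSpace ℂ (Fin a × Fin b)) : ℂ)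
      = ∑ p, (starRingEnd ℂ) (v p) * ρTA.mulVec v p := by
    simp [PiLp.inner_apply, RCLike.inner_apply]
    exact Finset.sum_congr rfl fun _ _ => mul_comm _ _
  rw [expand]
  calc (∑ p, (starRingEnd ℂ) (v p) * ρTA.mulVec v p)
      = ∑ p, ∑ k : Fin n × Fin n,
          (starRingEnd ℂ) (v p) * (((Real.sqrt (Γ k.1) : ℂ) * (Real.sqrt (Γ k.2) : ℂ)) *
            (inner ℂ (uvec φA φB k) v : ℂ) * uvec φA φB (k.2, k.1) p) := by
        apply Finset.sum_congr rfl; intro p _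
        rw [mulVec_eq φA φB Γ ψ hψ ρTA hρ, Finset.mul_sum]
    _ = ∑ k : Fin n × Fin n, ∑ p,
          (starRingEnd ℂ) (v p) * (((Real.sqrt (Γ k.1) : ℂ) * (Real.sqrt (Γ k.2) : ℂ)) *
            (inner ℂ (uvec φA φB k) v : ℂ) * uvec φA φB (k.2, k.1) p) :=
        Finset.sum_comm
    _ = _ := by
        have key : ∀ k : Fin n × Fin n,
            (∑ p, (starRingEnd ℂ) (v p) * uvec φA φB (k.2, k.1) p) =
              (starRingEnd ℂ) (inner ℂ (uvec φA φB (k.2, k.1)) v : ℂ) := by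
          intro k
          simp only [PiLp.inner_apply, RCLike.inner_apply, map_sum, _root_.map_mul,
            Complex.conj_conj]
        apply Finset.sum_congr rfl; intro k _
        rw [← key k]
        simp only [Finset.sum_mul, Finset.mul_sum]
        apply Finset.sum_congr rfl; intro p _
        ring

end PT16

end

open PT16 in
/-- let `|ψ⟩ ∈ H_A ⊗ H_B` be a pure state with Schmidt
decomposition `|ψ⟩ = ∑_r sqrt(Γ_r)|φ_r^A⟩|φ_r^B⟩`, `Γ_1 ≥ Γ_2 ≥ … ≥ 0`.
Then the minimum eigenvalue of the partial transpose `(|ψ⟩⟨ψ|)^{T_A}` is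
`−sqrt(Γ_1 Γ_2)`.  Orthonormality of the Schmidt bases is stated via the
standard inner products, and the partial transpose is taken with respect to
the standard basis on the first factor. -/
theorem pure_state_PT_min_eigenvalue (a b s : ℕ)
    (φA : Fin (s + 2) → Fin a → ℂ) (φB : Fin (s + 2) → Fin b → ℂ)
    (hA : ∀ r r', ∑ i, (starRingEnd ℂ) (φA r i) * φA r' i = if r = r' then 1 else 0)
    (hB : ∀ r r', ∑ i, (starRingEnd ℂ) (φB r i) * φB r' i = if r = r' then 1 else 0)
    (Γ : Fin (s + 2) → ℝ) (hΓ : ∀ r, 0 ≤ Γ r) (hmono : Antitone Γ)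
    (hsum : ∑ r, Γ r = 1)
    (ψ : Fin a × Fin b → ℂ)
    (hψ : ψ = fun p => ∑ r, (Real.sqrt (Γ r) : ℂ) * φA r p.1 * φB r p.2)
    (ρTA : Matrix (Fin a × Fin b) (Fin a × Fin b) ℂ)
    (hρ : ρTA = fun p q => ψ (q.1, p.2) * (starRingEnd ℂ) (ψ (p.1, q.2))) :
    IsLeast {μ : ℝ | ∃ v : Fin a × Fin b → ℂ, v ≠ 0 ∧ ρTA.mulVec v = (μ : ℂ) • v}
      (-Real.sqrt (Γ 0 * Γ 1)) := by
  have h01 : ((0 : Fin (s + 2)) : Fin (s + 2)) ≠ 1 := by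
    simp [Fin.ext_iff]
  have hon := uvec_orthonormal φA φB hA hB
  have honit := orthonormal_iff_ite.mp hon
  have hs01 : Real.sqrt (Γ 0 * Γ 1) = Real.sqrt (Γ 0) * Real.sqrt (Γ 1) :=
    Real.sqrt_mul (hΓ 0) _
  constructor
  · -- membership: eigenvector u(0,1) - u(1,0)
    refine ⟨(uvec φA φB (0, 1) : Fin a × Fin b → ℂ) - uvec φA φB (1, 0), ?_, ?_⟩
    · intro h0
      have h1 : (inner ℂ (uvec φA φB ((0 : Fin (s+2)), (1 : Fin (s+2))))
          ((uvec φA φB (0, 1) - uvec φA φB (1, 0)) :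
            EuclideanSpace ℂ (Fin a × Fin b)) : ℂ) = 1 := by
        rw [inner_sub_right, honit, honit]
        simp [Prod.ext_iff, h01]
      rw [show (uvec φA φB ((0 : Fin (s+2)), (1 : Fin (s+2))) - uvec φA φB (1, 0) :
            EuclideanSpace ℂ (Fin a × Fin b)) = 0 from WithLp.ofLp_injective 2 h0, inner_zero_right] at h1
      exact one_ne_zero h1.symm
    · rw [Matrix.mulVec_sub, mulVec_uvec φA φB hA hB Γ ψ hψ ρTA hρ,
        mulVec_uvec φA φB hA hB Γ ψ hψ ρTA hρ]
      funext p
      simp only [Pi.sub_apply, Pi.smul_apply, PiLp.smul_apply, PiLp.sub_apply,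
        smul_eq_mul, Complex.ofReal_neg, hs01, Complex.ofReal_mul]
      ring
  · -- lower bound
    rintro μ ⟨v, hv, heig⟩
    set V : EuclideanSpace ℂ (Fin a × Fin b) := WithLp.toLp 2 v with hV
    have hVne : V ≠ 0 := fun h => hv (by simpa [hV] using congrArg (WithLp.ofLp (p := 2)) h)
    have hnorm : 0 < ‖V‖ ^ 2 := by
      have := norm_pos_iff.mpr hVne
      positivity
    set c : Fin (s + 2) × Fin (s + 2) → ℂ := fun k => inner ℂ (uvec φA φB k) V with hc
    have heig' : (WithLp.toLp 2 (ρTA.mulVec V) : EuclideanSpace ℂ (Fin a × Fin b)) = (μ : ℂ) • V := by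
        rw [hV, WithLp.ofLp_toLp, heig]; rfl
    have h1re : (inner ℂ V (WithLp.toLp 2 (ρTA.mulVec V) : EuclideanSpace ℂ (Fin a × Fin b)) : ℂ).re
        = μ * ‖V‖ ^ 2 := by
      rw [heig', inner_smul_right, inner_self_eq_norm_sq_to_K]
      norm_num
      left
      norm_cast
    have h2 := inner_rho φA φB Γ ψ hψ ρTA hρ V
    have hre : μ * ‖V‖ ^ 2 = ∑ k : Fin (s + 2) × Fin (s + 2),
        (Real.sqrt (Γ k.1) * Real.sqrt (Γ k.2)) *
          ((starRingEnd ℂ) (c (k.2, k.1)) * c k).re := by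
      rw [← h1re, h2, Complex.re_sum]
      apply Finset.sum_congr rfl; intro k _
      rw [← Complex.ofReal_mul, Complex.re_ofReal_mul]
    have hterm : ∀ k : Fin (s + 2) × Fin (s + 2),
        -(Real.sqrt (Γ 0 * Γ 1) * ((‖c k‖ ^ 2 + ‖c (k.2, k.1)‖ ^ 2) / 2)) ≤
          (Real.sqrt (Γ k.1) * Real.sqrt (Γ k.2)) *
            ((starRingEnd ℂ) (c (k.2, k.1)) * c k).re := by
      intro k
      obtain ⟨k1, k2⟩ := k
      simp only
      by_cases hk : k1 = k2
      · subst hk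
        have hre0 : ((starRingEnd ℂ) (c (k1, k1)) * c (k1, k1)).re
            = Complex.normSq (c (k1, k1)) := by
          rw [mul_comm, Complex.mul_conj, Complex.ofReal_re]
        rw [hre0]
        have h1' : 0 ≤ Real.sqrt (Γ k1) * Real.sqrt (Γ k1) * Complex.normSq (c (k1, k1)) :=
          mul_nonneg (mul_nonneg (Real.sqrt_nonneg _) (Real.sqrt_nonneg _))
            (Complex.normSq_nonneg _)
        have h2' : 0 ≤ Real.sqrt (Γ 0 * Γ 1) *
            ((‖c (k1, k1)‖ ^ 2 + ‖c (k1, k1)‖ ^ 2) / 2) := by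
          positivity
        linarith
      · have hprod : Γ k1 * Γ k2 ≤ Γ 0 * Γ 1 := by
          rcases lt_or_gt_of_ne hk with hlt | hgt
          · have h2le : (1 : Fin (s + 2)) ≤ k2 := by
              rw [Fin.le_def, Fin.val_one]
              have := (Fin.lt_def.mp hlt)
              omega
            exact mul_le_mul (hmono (Fin.zero_le _)) (hmono h2le) (hΓ _) (hΓ 0)
          · have h1le : (1 : Fin (s + 2)) ≤ k1 := by
              rw [Fin.le_def, Fin.val_one]
              have := (Fin.lt_def.mp hgt)
              omega
            calc Γ k1 * Γ k2 = Γ k2 * Γ k1 := mul_comm _ _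
              _ ≤ Γ 0 * Γ 1 := mul_le_mul (hmono (Fin.zero_le _)) (hmono h1le) (hΓ _) (hΓ 0)
        have hμle : Real.sqrt (Γ k1) * Real.sqrt (Γ k2) ≤ Real.sqrt (Γ 0 * Γ 1) := by
          rw [← Real.sqrt_mul (hΓ k1)]
          exact Real.sqrt_le_sqrt hprod
        set x := c (k1, k2)
        set y := c (k2, k1)
        have habs : -(‖y‖ * ‖x‖) ≤ ((starRingEnd ℂ) y * x).re := by
          have h3' : |((starRingEnd ℂ) y * x).re| ≤ ‖(starRingEnd ℂ) y * x‖ :=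
            Complex.abs_re_le_norm _
          have h4' : ‖(starRingEnd ℂ) y * x‖ = ‖y‖ * ‖x‖ := by
            rw [norm_mul, RCLike.norm_conj]
          rw [h4'] at h3'
          linarith [neg_abs_le (((starRingEnd ℂ) y * x).re)]
        have hsq : ‖y‖ * ‖x‖ ≤ (‖x‖ ^ 2 + ‖y‖ ^ 2) / 2 := by
          nlinarith [sq_nonneg (‖x‖ - ‖y‖)]
        have hP : 0 ≤ Real.sqrt (Γ k1) * Real.sqrt (Γ k2) := by positivity
        have hS : 0 ≤ Real.sqrt (Γ 0 * Γ 1) := Real.sqrt_nonneg _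
        have hxy : 0 ≤ ‖y‖ * ‖x‖ := by positivity
        nlinarith [mul_le_mul_of_nonneg_left habs hP,
          mul_le_mul_of_nonneg_right hμle hxy,
          mul_le_mul_of_nonneg_left hsq hS]
    have hsumle : -(Real.sqrt (Γ 0 * Γ 1) * ‖V‖ ^ 2) ≤ μ * ‖V‖ ^ 2 := by
      rw [hre]
      have step1 : ∑ k : Fin (s + 2) × Fin (s + 2),
          -(Real.sqrt (Γ 0 * Γ 1) * ((‖c k‖ ^ 2 + ‖c (k.2, k.1)‖ ^ 2) / 2)) ≤
          ∑ k : Fin (s + 2) × Fin (s + 2),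
            (Real.sqrt (Γ k.1) * Real.sqrt (Γ k.2)) *
              ((starRingEnd ℂ) (c (k.2, k.1)) * c k).re :=
        Finset.sum_le_sum fun k _ => hterm k
      have hswap : ∑ k : Fin (s + 2) × Fin (s + 2), ‖c (k.2, k.1)‖ ^ 2 =
          ∑ k : Fin (s + 2) × Fin (s + 2), ‖c k‖ ^ 2 :=
        Fintype.sum_equiv (Equiv.prodComm _ _) _ _ (fun k => rfl)
      have hbessel : ∑ k : Fin (s + 2) × Fin (s + 2), ‖c k‖ ^ 2 ≤ ‖V‖ ^ 2 := by
        simpa [hc] using hon.sum_inner_products_le (x := V) (s := Finset.univ)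
      have step2 : ∑ k : Fin (s + 2) × Fin (s + 2),
          -(Real.sqrt (Γ 0 * Γ 1) * ((‖c k‖ ^ 2 + ‖c (k.2, k.1)‖ ^ 2) / 2)) =
          -(Real.sqrt (Γ 0 * Γ 1) * (∑ k : Fin (s + 2) × Fin (s + 2), ‖c k‖ ^ 2)) := by
        rw [Finset.sum_neg_distrib]
        congr 1
        rw [← Finset.mul_sum]
        congr 1
        rw [← Finset.sum_div, Finset.sum_add_distrib, hswap]
        ring
      have step3 : -(Real.sqrt (Γ 0 * Γ 1) * ‖V‖ ^ 2) ≤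
          -(Real.sqrt (Γ 0 * Γ 1) * (∑ k : Fin (s + 2) × Fin (s + 2), ‖c k‖ ^ 2)) := by
        have := mul_le_mul_of_nonneg_left hbessel (Real.sqrt_nonneg (Γ 0 * Γ 1))
        linarith
      rw [step2] at step1
      linarith [step1, step3]
    have := (mul_le_mul_iff_of_pos_right hnorm).mp (by linarith [hsumle] : (-Real.sqrt (Γ 0 * Γ 1)) * ‖V‖ ^ 2 ≤ μ * ‖V‖ ^ 2)
    exact this
end
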